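/- arXiv:1710.02715 — 6 statements merged into one kernel-verified Lean document; each statement's English description precedes it below -/
import Mathlib

section
/- For every p ≥ 1 and all probability measures P_1, P_2 on ℝ with finite p-th moments, W_p(P_1, P_2) ≥ (1/√2) · T_1(P_1, P_2), where T_1 is the Toscani–Fourier distance of order 1. -/
open MeasureTheory ProbabilityTheory
open scoped ENNReal NNReal

/-- Wasserstein "distance" of order `p` with respect to a cost function `c`,
with values in `ℝ≥0∞`: the infimum over all couplings `π` of `μ` and `ν` of
`(∫ c(x,y)^p dπ)^(1/p)`. -/
noncomputable def wassersteinCost {E : Type*} [MeasurableSpace E]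
    (c : E → E → ℝ) (p : ℝ) (μ ν : Measure E) : ℝ≥0∞ :=
  ⨅ π ∈ {π : Measure (E × E) |
      IsProbabilityMeasure π ∧ π.map Prod.fst = μ ∧ π.map Prod.snd = ν},
    (∫⁻ z, ENNReal.ofReal (c z.1 z.2) ^ p ∂π) ^ (1 / p)

/-- Wasserstein distance of order `p` between measures on `ℝ` (usual metric). -/
noncomputable def wasserstein (p : ℝ) (μ ν : Measure ℝ) : ℝ≥0∞ :=
  wassersteinCost (fun x y => |x - y|) p μ ν

/-- Characteristic function of a measure on `ℝ`. -/
noncomputable def charFn (μ : Measure ℝ) (u : ℝ) : ℂ :=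
  ∫ x, Complex.exp ((u * x : ℝ) * Complex.I) ∂μ

/-- Toscani–Fourier distance of order `s`, with values in `ℝ≥0∞`. -/
noncomputable def toscani (s : ℝ) (μ ν : Measure ℝ) : ℝ≥0∞ :=
  ⨆ u : {u : ℝ // u ≠ 0}, ENNReal.ofReal (‖charFn μ u.1 - charFn ν u.1‖ / |u.1| ^ s)

/-- Total variation distance between two measures. -/
noncomputable def tvDist {α : Type*} [MeasurableSpace α] (μ ν : Measure α) : ℝ :=
  ⨆ A : {A : Set α // MeasurableSet A}, |(μ A.1).toReal - (ν A.1).toReal|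

/-- Convolution of two measures on `ℝ`. -/
noncomputable def mconv (μ ν : Measure ℝ) : Measure ℝ :=
  (μ.prod ν).map (fun z => z.1 + z.2)

/-- The Poisson distribution with mean `lam`, as a measure on `ℕ`. -/
noncomputable def poissonNat (lam : ℝ) : Measure ℕ :=
  Measure.sum fun k : ℕ =>
    ENNReal.ofReal (Real.exp (-lam) * lam ^ k / (Nat.factorial k)) • Measure.dirac k

/-- The Poisson distribution with mean `lam`, as a measure on `ℝ`. -/
noncomputable def poissonReal (lam : ℝ) : Measure ℝ :=
  Measure.sum fun k : ℕ =>
    ENNReal.ofReal (Real.exp (-lam) * lam ^ k / (Nat.factorial k)) • Measure.dirac (k : ℝ)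

/-- `f'` is a weak derivative of `f` on `ℝ`. -/
def IsWeakDeriv (f f' : ℝ → ℝ) : Prop :=
  ∀ φ : ℝ → ℝ, ContDiff ℝ (⊤ : ℕ∞) φ → HasCompactSupport φ →
    ∫ x, f x * deriv φ x = -∫ x, f' x * φ x

/-- The integrand of the Lévy–Khintchine exponent with truncation `1`. -/
noncomputable def lkIntegrand (u x : ℝ) : ℂ :=
  Complex.exp ((u * x : ℝ) * Complex.I) - 1 -
    (if |x| ≤ 1 then ((u * x : ℝ) : ℂ) * Complex.I else 0)

/-- The integrand of the Lévy–Khintchine exponent fully compensated (for small jumps). -/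
noncomputable def lkIntegrandC (u x : ℝ) : ℂ :=
  Complex.exp ((u * x : ℝ) * Complex.I) - 1 - ((u * x : ℝ) : ℂ) * Complex.I


lemma norm_exp_I_sub_one_le (t : ℝ) : ‖Complex.exp (t * Complex.I) - 1‖ ≤ |t| := by
  have h : Complex.exp ((t : ℂ) * Complex.I)
      = ((Real.cos t : ℝ) : ℂ) + (Real.sin t : ℝ) * Complex.I := by
    rw [Complex.exp_mul_I, Complex.ofReal_cos, Complex.ofReal_sin]
  have h2 : Complex.exp ((t : ℂ) * Complex.I) - 1
      = ((Real.cos t - 1 : ℝ) : ℂ) + (Real.sin t : ℝ) * Complex.I := by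
    rw [h]; push_cast; ring
  rw [h2, Complex.norm_add_mul_I]
  rw [show |t| = Real.sqrt (t ^ 2) from (Real.sqrt_sq_eq_abs t).symm]
  apply Real.sqrt_le_sqrt
  nlinarith [Real.one_sub_sq_div_two_le_cos (x := t), Real.sin_sq_add_cos_sq t]

lemma norm_exp_I_sub_exp_I_le (a b : ℝ) :
    ‖Complex.exp (a * Complex.I) - Complex.exp (b * Complex.I)‖ ≤ |a - b| := by
  have : Complex.exp ((a : ℂ) * Complex.I) - Complex.exp ((b : ℂ) * Complex.I)
      = Complex.exp ((b : ℂ) * Complex.I) * (Complex.exp (((a - b : ℝ) : ℂ) * Complex.I) - 1) := by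
    rw [mul_sub, ← Complex.exp_add]; push_cast; ring_nf
  rw [this, norm_mul]
  have h1 : ‖Complex.exp ((b : ℂ) * Complex.I)‖ = 1 := by
    exact Complex.norm_exp_ofReal_mul_I b
  rw [h1, one_mul]
  exact norm_exp_I_sub_one_le (a - b)

lemma coupling_bound (p : ℝ) (hp : 1 ≤ p) (P1 P2 : Measure ℝ)
    [IsProbabilityMeasure P1] [IsProbabilityMeasure P2]
    (π : Measure (ℝ × ℝ)) (hprob : IsProbabilityMeasure π)
    (hfst : π.map Prod.fst = P1) (hsnd : π.map Prod.snd = P2) (u : ℝ) (hu : u ≠ 0) :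
    ENNReal.ofReal (‖charFn P1 u - charFn P2 u‖ / |u| ^ (1:ℝ)) ≤
      (∫⁻ z : ℝ × ℝ, ENNReal.ofReal |z.1 - z.2| ^ p ∂π) ^ (1 / p) := by
  haveI := hprob
  set L : ℝ≥0∞ := ∫⁻ z : ℝ × ℝ, ENNReal.ofReal |z.1 - z.2| ∂π with hL
  -- Step 2: L ≤ RHS
  have hF : AEStronglyMeasurable (fun z : ℝ × ℝ => z.1 - z.2) π :=
    (continuous_fst.sub continuous_snd).aestronglyMeasurable
  have hple : (1 : ℝ≥0∞) ≤ ENNReal.ofReal p := by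
    rw [← ENNReal.ofReal_one]; exact ENNReal.ofReal_le_ofReal hp
  have hstep2 : L ≤ (∫⁻ z : ℝ × ℝ, ENNReal.ofReal |z.1 - z.2| ^ p ∂π) ^ (1 / p) := by
    have h := eLpNorm_le_eLpNorm_of_exponent_le hple hF
    rw [eLpNorm_one_eq_lintegral_enorm,
      eLpNorm_eq_lintegral_rpow_enorm_toReal (by positivity) ENNReal.ofReal_ne_top] at h
    have hpR : (ENNReal.ofReal p).toReal = p := ENNReal.toReal_ofReal (by linarith)
    rw [hpR] at h
    have hco : ∀ z : ℝ × ℝ, ‖z.1 - z.2‖ₑ = ENNReal.ofReal |z.1 - z.2| := by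
      intro z; rw [← ofReal_norm, Real.norm_eq_abs]
    simpa [hco] using h
  -- Step 1
  have hstep1 : ENNReal.ofReal ‖charFn P1 u - charFn P2 u‖ ≤ ENNReal.ofReal |u| * L := by
    set f1 : ℝ × ℝ → ℂ := fun z => Complex.exp ((u * z.1 : ℝ) * Complex.I) with hf1
    set f2 : ℝ × ℝ → ℂ := fun z => Complex.exp ((u * z.2 : ℝ) * Complex.I) with hf2
    have hc1 : Continuous f1 := by
      apply Complex.continuous_exp.comp; continuity
    have hc2 : Continuous f2 := by
      apply Complex.continuous_exp.comp; continuity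
    have hi1 : Integrable f1 π := by
      refine (integrable_const (1:ℝ)).mono' hc1.aestronglyMeasurable ?_
      filter_upwards with z
      simp only [hf1]
      exact le_of_eq (Complex.norm_exp_ofReal_mul_I _)
    have hi2 : Integrable f2 π := by
      refine (integrable_const (1:ℝ)).mono' hc2.aestronglyMeasurable ?_
      filter_upwards with z
      simp only [hf2]
      exact le_of_eq (Complex.norm_exp_ofReal_mul_I _)
    have e1 : charFn P1 u = ∫ z, f1 z ∂π := by
      rw [charFn, ← hfst, integral_map measurable_fst.aemeasurable]
      exact (Complex.continuous_exp.comp (by continuity)).aestronglyMeasurable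
    have e2 : charFn P2 u = ∫ z, f2 z ∂π := by
      rw [charFn, ← hsnd, integral_map measurable_snd.aemeasurable]
      exact (Complex.continuous_exp.comp (by continuity)).aestronglyMeasurable
    have eΔ : charFn P1 u - charFn P2 u = ∫ z, (f1 z - f2 z) ∂π := by
      rw [e1, e2, integral_sub hi1 hi2]
    rw [eΔ, ofReal_norm]
    calc ‖∫ z, (f1 z - f2 z) ∂π‖ₑ ≤ ∫⁻ z, ‖f1 z - f2 z‖ₑ ∂π :=
          enorm_integral_le_lintegral_enorm _
      _ ≤ ∫⁻ z, ENNReal.ofReal (|u| * |z.1 - z.2|) ∂π := by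
          refine lintegral_mono fun z => ?_
          rw [← ofReal_norm]
          apply ENNReal.ofReal_le_ofReal
          calc ‖f1 z - f2 z‖ ≤ |u * z.1 - u * z.2| := norm_exp_I_sub_exp_I_le _ _
            _ = |u| * |z.1 - z.2| := by rw [← mul_sub, abs_mul]
      _ = ENNReal.ofReal |u| * L := by
          rw [hL, ← lintegral_const_mul' _ _ ENNReal.ofReal_ne_top]
          congr 1; funext z
          rw [ENNReal.ofReal_mul (abs_nonneg u)]
  -- combine
  refine le_trans ?_ hstep2
  rw [Real.rpow_one, ENNReal.ofReal_div_of_pos (abs_pos.mpr hu)]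
  rw [ENNReal.div_le_iff (by simpa [ENNReal.ofReal_eq_zero, not_le] using abs_pos.mpr hu)
    ENNReal.ofReal_ne_top]
  exact hstep1.trans_eq (mul_comm _ _)

/-- The `p`-Wasserstein distance dominates `1/√2` times the
Toscani–Fourier distance of order `1`. -/
theorem statement3 (p : ℝ) (hp : 1 ≤ p) (P1 P2 : Measure ℝ)
    [IsProbabilityMeasure P1] [IsProbabilityMeasure P2]
    (h1 : ∫⁻ x, ENNReal.ofReal |x| ^ p ∂P1 ≠ ⊤)
    (h2 : ∫⁻ x, ENNReal.ofReal |x| ^ p ∂P2 ≠ ⊤) :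
    ENNReal.ofReal (1 / Real.sqrt 2) * toscani 1 P1 P2 ≤ wasserstein p P1 P2 := by
  have key : toscani 1 P1 P2 ≤ wasserstein p P1 P2 := by
    rw [wasserstein, wassersteinCost]
    refine le_iInf fun π => le_iInf fun hπ => ?_
    obtain ⟨hprob, hfst, hsnd⟩ := hπ
    rw [toscani]
    exact iSup_le fun u => coupling_bound p hp P1 P2 π hprob hfst hsnd u.1 u.2
  calc ENNReal.ofReal (1 / Real.sqrt 2) * toscani 1 P1 P2
      ≤ 1 * toscani 1 P1 P2 := by
        refine mul_le_mul_left (ENNReal.ofReal_le_one.mpr ?_) _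
        rw [div_le_one (by positivity)]
        rw [show (1:ℝ) = Real.sqrt 1 from (Real.sqrt_one).symm]
        exact Real.sqrt_le_sqrt (by norm_num)
    _ = toscani 1 P1 P2 := one_mul _
    _ ≤ wasserstein p P1 P2 := key
end

section
/- Let N and N' be Poisson random variables with means λ and λ' respectively. Then for p ≥ 1, W_p(N, N')^p ≤ m_{(p, |λ−λ'|)}, where m_{(p,ℓ)} denotes the p-th moment of a Poisson random variable of mean ℓ. In particular, W_1(N, N') ≤ |λ − λ'|, and for 1 < p ≤ 2, W_p(N, N')^p ≤ |λ − λ'| + |λ − λ'|^p. -/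
open MeasureTheory ProbabilityTheory
open scoped ENNReal NNReal

namespace Statement7Aux

open Finset in
/-- The equivalence `(Σ n, Fin (n+1)) ≃ ℕ × ℕ`, `⟨n, j⟩ ↦ (j, n - j)`. -/
def eqv : (Σ n : ℕ, Fin (n + 1)) ≃ ℕ × ℕ where
  toFun x := (x.2.1, x.1 - x.2.1)
  invFun p := ⟨p.1 + p.2, ⟨p.1, by omega⟩⟩
  left_inv := by
    rintro ⟨n, ⟨j, hj⟩⟩
    have hj' : j ≤ n := Nat.lt_succ_iff.mp hj
    refine Sigma.ext (by simp; omega) ?_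
    refine (Fin.heq_ext_iff (by simp; omega)).mpr ?_
    rfl
  right_inv := by rintro ⟨j, k⟩; simp

lemma regroup (g : ℕ × ℕ → ℝ≥0∞) :
    ∑' jk : ℕ × ℕ, g jk = ∑' n : ℕ, ∑ j ∈ Finset.range (n + 1), g (j, n - j) := by
  rw [← Equiv.tsum_eq eqv g, ENNReal.tsum_sigma']
  refine tsum_congr fun n => ?_
  rw [tsum_fintype]
  exact Fin.sum_univ_eq_sum_range (fun j => g (j, n - j)) (n + 1)

noncomputable def pw (c : ℝ) (k : ℕ) : ℝ≥0∞ :=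
  ENNReal.ofReal (Real.exp (-c) * c ^ k / (Nat.factorial k))

lemma poissonReal_eq (c : ℝ) :
    poissonReal c = Measure.sum fun k : ℕ => pw c k • Measure.dirac (k : ℝ) := rfl

lemma base_nonneg (c : ℝ) (k : ℕ) (hc : 0 ≤ c) :
    0 ≤ Real.exp (-c) * c ^ k / (Nat.factorial k) := by positivity

lemma summable_base (c : ℝ) :
    Summable fun k : ℕ => Real.exp (-c) * c ^ k / (Nat.factorial k) := by
  simpa [mul_div_assoc] using (Real.summable_pow_div_factorial c).mul_left (Real.exp (-c))

lemma tsum_base (c : ℝ) :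
    ∑' k : ℕ, Real.exp (-c) * c ^ k / (Nat.factorial k) = 1 := by
  have hexp : Real.exp c = ∑' k : ℕ, c ^ k / (Nat.factorial k) := by
    rw [Real.exp_eq_exp_ℝ, NormedSpace.exp_eq_tsum_div]
  have h : ∑' k : ℕ, Real.exp (-c) * c ^ k / (Nat.factorial k)
      = Real.exp (-c) * ∑' k : ℕ, c ^ k / (Nat.factorial k) := by
    rw [← tsum_mul_left]
    exact tsum_congr fun k => by rw [mul_div_assoc]
  rw [h, ← hexp, ← Real.exp_add]
  simp

lemma tsum_pw {c : ℝ} (hc : 0 ≤ c) : ∑' k : ℕ, pw c k = 1 := by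
  unfold pw
  rw [← ENNReal.ofReal_tsum_of_nonneg (fun k => base_nonneg c k hc) (summable_base c),
    tsum_base, ENNReal.ofReal_one]

lemma shift_eq (c : ℝ) (k : ℕ) :
    Real.exp (-c) * c ^ (k + 1) / (Nat.factorial (k + 1)) * ((k + 1 : ℕ) : ℝ)
      = c * (Real.exp (-c) * c ^ k / (Nat.factorial k)) := by
  have h1 : ((Nat.factorial (k + 1) : ℝ)) = (k + 1) * (Nat.factorial k) := by
    rw [Nat.factorial_succ]; push_cast; ring
  have h2 : (Nat.factorial k : ℝ) ≠ 0 := Nat.cast_ne_zero.mpr (Nat.factorial_ne_zero k)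
  have h3 : ((k : ℝ) + 1) ≠ 0 := by positivity
  rw [h1]; push_cast; field_simp; ring

lemma summable_mean (c : ℝ) :
    Summable fun k : ℕ => Real.exp (-c) * c ^ k / (Nat.factorial k) * k := by
  exact (summable_nat_add_iff 1).mp
    (((summable_base c).mul_left c).congr fun k => (shift_eq c k).symm)

lemma tsum_mean (c : ℝ) :
    ∑' k : ℕ, Real.exp (-c) * c ^ k / (Nat.factorial k) * k = c := by
  rw [Summable.tsum_eq_zero_add (summable_mean c)]
  have h : ∀ k : ℕ, Real.exp (-c) * c ^ (k + 1) / (Nat.factorial (k + 1)) * ((k + 1 : ℕ) : ℝ)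
      = c * (Real.exp (-c) * c ^ k / (Nat.factorial k)) := shift_eq c
  have : ∑' k : ℕ, Real.exp (-c) * c ^ (k + 1) / (Nat.factorial (k + 1)) * ((k + 1 : ℕ) : ℝ)
      = c * ∑' k : ℕ, Real.exp (-c) * c ^ k / (Nat.factorial k) := by
    rw [← tsum_mul_left]; exact tsum_congr h
  push_cast at this ⊢
  rw [this, tsum_base]
  simp

lemma shift_eq_sq (c : ℝ) (k : ℕ) :
    Real.exp (-c) * c ^ (k + 1) / (Nat.factorial (k + 1)) * (((k + 1 : ℕ) : ℝ)) ^ 2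
      = c * (Real.exp (-c) * c ^ k / (Nat.factorial k) * k
          + Real.exp (-c) * c ^ k / (Nat.factorial k)) := by
  have h := shift_eq c k
  have h2 : Real.exp (-c) * c ^ (k + 1) / (Nat.factorial (k + 1)) * (((k + 1 : ℕ) : ℝ)) ^ 2
      = (Real.exp (-c) * c ^ (k + 1) / (Nat.factorial (k + 1)) * ((k + 1 : ℕ) : ℝ))
        * ((k : ℝ) + 1) := by push_cast; ring
  rw [h2, h]; ring

lemma summable_sq (c : ℝ) :
    Summable fun k : ℕ => Real.exp (-c) * c ^ k / (Nat.factorial k) * (k : ℝ) ^ 2 := by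
  exact (summable_nat_add_iff 1).mp
    ((((summable_mean c).add (summable_base c)).mul_left c).congr
      fun k => (shift_eq_sq c k).symm)

lemma tsum_sq (c : ℝ) :
    ∑' k : ℕ, Real.exp (-c) * c ^ k / (Nat.factorial k) * (k : ℝ) ^ 2 = c + c ^ 2 := by
  rw [Summable.tsum_eq_zero_add (summable_sq c)]
  have : ∑' k : ℕ, Real.exp (-c) * c ^ (k + 1) / (Nat.factorial (k + 1))
        * (((k + 1 : ℕ) : ℝ)) ^ 2
      = c * ∑' k : ℕ, (Real.exp (-c) * c ^ k / (Nat.factorial k) * k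
          + Real.exp (-c) * c ^ k / (Nat.factorial k)) := by
    rw [← tsum_mul_left]; exact tsum_congr fun k => shift_eq_sq c k
  have hadd : ∑' k : ℕ, (Real.exp (-c) * c ^ k / (Nat.factorial k) * k
        + Real.exp (-c) * c ^ k / (Nat.factorial k))
      = (∑' k : ℕ, Real.exp (-c) * c ^ k / (Nat.factorial k) * k)
        + ∑' k : ℕ, Real.exp (-c) * c ^ k / (Nat.factorial k) :=
    Summable.tsum_add (summable_mean c) (summable_base c)
  push_cast at this ⊢
  rw [this, hadd, tsum_mean, tsum_base]
  ring

lemma tsum_pw_mul (hc : 0 ≤ c) :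
    ∑' k : ℕ, pw c k * ENNReal.ofReal ((k : ℕ) : ℝ) = ENNReal.ofReal c := by
  have h : ∀ k : ℕ, pw c k * ENNReal.ofReal ((k : ℕ) : ℝ)
      = ENNReal.ofReal (Real.exp (-c) * c ^ k / (Nat.factorial k) * k) := fun k => by
    rw [pw, ← ENNReal.ofReal_mul (base_nonneg c k hc)]
  rw [tsum_congr h,
    ← ENNReal.ofReal_tsum_of_nonneg
      (fun k => mul_nonneg (base_nonneg c k hc) (Nat.cast_nonneg k)) (summable_mean c),
    tsum_mean]

lemma tsum_pw_mul_sq (hc : 0 ≤ c) :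
    ∑' k : ℕ, pw c k * ENNReal.ofReal (((k : ℕ) : ℝ) ^ 2) = ENNReal.ofReal (c + c ^ 2) := by
  have h : ∀ k : ℕ, pw c k * ENNReal.ofReal (((k : ℕ) : ℝ) ^ 2)
      = ENNReal.ofReal (Real.exp (-c) * c ^ k / (Nat.factorial k) * (k : ℝ) ^ 2) := fun k => by
    rw [pw, ← ENNReal.ofReal_mul (base_nonneg c k hc)]
  rw [tsum_congr h,
    ← ENNReal.ofReal_tsum_of_nonneg
      (fun k => mul_nonneg (base_nonneg c k hc) (sq_nonneg _)) (summable_sq c),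
    tsum_sq]

lemma real_conv (a e : ℝ) (n : ℕ) :
    ∑ j ∈ Finset.range (n + 1),
      Real.exp (-a) * a ^ j / (Nat.factorial j)
        * (Real.exp (-e) * e ^ (n - j) / (Nat.factorial (n - j)))
      = Real.exp (-(a + e)) * (a + e) ^ n / (Nat.factorial n) := by
  rw [neg_add, Real.exp_add, add_pow, mul_div_assoc, Finset.sum_div, Finset.mul_sum]
  refine Finset.sum_congr rfl fun j hj => ?_
  have hjn : j ≤ n := Nat.lt_succ_iff.mp (Finset.mem_range.mp hj)
  have key : ((n.choose j : ℕ) : ℝ) * (Nat.factorial j) * (Nat.factorial (n - j))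
      = (Nat.factorial n) := by exact_mod_cast Nat.choose_mul_factorial_mul_factorial hjn
  have h1 : (Nat.factorial j : ℝ) ≠ 0 := Nat.cast_ne_zero.mpr (Nat.factorial_ne_zero j)
  have h2 : (Nat.factorial (n - j) : ℝ) ≠ 0 := Nat.cast_ne_zero.mpr (Nat.factorial_ne_zero _)
  have h3 : (Nat.factorial n : ℝ) ≠ 0 := Nat.cast_ne_zero.mpr (Nat.factorial_ne_zero n)
  have h4 : ((n.choose j : ℕ) : ℝ) ≠ 0 :=
    Nat.cast_ne_zero.mpr (Nat.choose_pos hjn).ne'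
  rw [← key]
  field_simp

lemma pw_conv {a e : ℝ} (ha : 0 ≤ a) (he : 0 ≤ e) (n : ℕ) :
    ∑ j ∈ Finset.range (n + 1), pw a j * pw e (n - j) = pw (a + e) n := by
  have h : ∀ j ∈ Finset.range (n + 1), pw a j * pw e (n - j)
      = ENNReal.ofReal (Real.exp (-a) * a ^ j / (Nat.factorial j)
          * (Real.exp (-e) * e ^ (n - j) / (Nat.factorial (n - j)))) := fun j _ => by
    rw [pw, pw, ← ENNReal.ofReal_mul (base_nonneg a j ha)]
  rw [Finset.sum_congr rfl h,
    ← ENNReal.ofReal_sum_of_nonneg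
      (fun j _ => mul_nonneg (base_nonneg a j ha) (base_nonneg e (n - j) he)),
    real_conv]
  rfl

/-- The coupling: law of `(N, N + M)` with `N, M` independent Poissons. -/
noncomputable def cpl (a e : ℝ) : Measure (ℝ × ℝ) :=
  Measure.sum fun jk : ℕ × ℕ =>
    (pw a jk.1 * pw e jk.2) • Measure.dirac ((jk.1 : ℝ), ((jk.1 + jk.2 : ℕ) : ℝ))

lemma cpl_apply (a e : ℝ) {s : Set (ℝ × ℝ)} (hs : MeasurableSet s) :
    cpl a e s = ∑' jk : ℕ × ℕ,
      (pw a jk.1 * pw e jk.2) * s.indicator 1 ((jk.1 : ℝ), ((jk.1 + jk.2 : ℕ) : ℝ)) := by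
  rw [cpl, Measure.sum_apply _ hs]
  simp only [Measure.smul_apply, smul_eq_mul, Measure.dirac_apply' _ hs]

lemma cpl_prob {a e : ℝ} (ha : 0 ≤ a) (he : 0 ≤ e) : IsProbabilityMeasure (cpl a e) := by
  constructor
  rw [cpl_apply a e MeasurableSet.univ]
  simp only [Set.indicator_univ, Pi.one_apply, mul_one]
  rw [ENNReal.tsum_prod']
  have h : ∀ j : ℕ, ∑' k : ℕ, pw a j * pw e k = pw a j := fun j => by
    rw [ENNReal.tsum_mul_left, tsum_pw he, mul_one]
  rw [tsum_congr h, tsum_pw ha]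

lemma cpl_map_fst {a e : ℝ} (ha : 0 ≤ a) (he : 0 ≤ e) :
    (cpl a e).map Prod.fst = poissonReal a := by
  ext s hs
  rw [Measure.map_apply measurable_fst hs, cpl_apply a e (measurable_fst hs),
    poissonReal_eq, Measure.sum_apply _ hs]
  simp only [Measure.smul_apply, smul_eq_mul, Measure.dirac_apply' _ hs]
  rw [ENNReal.tsum_prod']
  refine tsum_congr fun j => ?_
  have hind : ∀ k : ℕ,
      (Prod.fst ⁻¹' s).indicator (1 : ℝ × ℝ → ℝ≥0∞) ((j : ℝ), ((j + k : ℕ) : ℝ))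
        = s.indicator 1 ((j : ℕ) : ℝ) := fun k => by
    by_cases hj : ((j : ℕ) : ℝ) ∈ s <;>
      simp [Set.indicator_apply, Set.mem_preimage, hj]
  have h : ∀ k : ℕ,
      pw a j * pw e k * (Prod.fst ⁻¹' s).indicator (1 : ℝ × ℝ → ℝ≥0∞)
          ((j : ℝ), ((j + k : ℕ) : ℝ))
        = (pw a j * s.indicator 1 ((j : ℕ) : ℝ)) * pw e k := fun k => by
    rw [hind k]; ring
  rw [tsum_congr h, ENNReal.tsum_mul_left, tsum_pw he, mul_one]

lemma cpl_map_snd {a e : ℝ} (ha : 0 ≤ a) (he : 0 ≤ e) :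
    (cpl a e).map Prod.snd = poissonReal (a + e) := by
  ext s hs
  rw [Measure.map_apply measurable_snd hs, cpl_apply a e (measurable_snd hs),
    poissonReal_eq, Measure.sum_apply _ hs]
  simp only [Measure.smul_apply, smul_eq_mul, Measure.dirac_apply' _ hs]
  have hind : ∀ jk : ℕ × ℕ,
      (Prod.snd ⁻¹' s).indicator (1 : ℝ × ℝ → ℝ≥0∞) ((jk.1 : ℝ), ((jk.1 + jk.2 : ℕ) : ℝ))
        = s.indicator 1 (((jk.1 + jk.2 : ℕ) : ℕ) : ℝ) := fun jk => by
    have hmem : ((jk.1 : ℝ), ((jk.1 + jk.2 : ℕ) : ℝ)) ∈ Prod.snd ⁻¹' s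
        ↔ (((jk.1 + jk.2 : ℕ) : ℕ) : ℝ) ∈ s := Iff.rfl
    by_cases hj : (((jk.1 + jk.2 : ℕ) : ℕ) : ℝ) ∈ s
    · rw [Set.indicator_of_mem (hmem.mpr hj), Set.indicator_of_mem hj]; rfl
    · rw [Set.indicator_of_notMem (fun hx => hj (hmem.mp hx)),
        Set.indicator_of_notMem hj]
  have h : ∀ jk : ℕ × ℕ,
      pw a jk.1 * pw e jk.2 * (Prod.snd ⁻¹' s).indicator (1 : ℝ × ℝ → ℝ≥0∞)
          ((jk.1 : ℝ), ((jk.1 + jk.2 : ℕ) : ℝ))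
        = pw a jk.1 * pw e jk.2 * s.indicator 1 (((jk.1 + jk.2 : ℕ) : ℕ) : ℝ) := fun jk => by
    rw [hind jk]
  rw [tsum_congr h,
    regroup (fun jk => pw a jk.1 * pw e jk.2 * s.indicator 1 (((jk.1 + jk.2 : ℕ) : ℕ) : ℝ))]
  refine tsum_congr fun n => ?_
  have h2 : ∀ j ∈ Finset.range (n + 1),
      pw a j * pw e (n - j) * s.indicator 1 (((j + (n - j) : ℕ) : ℕ) : ℝ)
        = pw a j * pw e (n - j) * s.indicator 1 ((n : ℕ) : ℝ) := fun j hj => by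
    have : j + (n - j) = n := by
      have := Nat.lt_succ_iff.mp (Finset.mem_range.mp hj); omega
    rw [this]
  rw [Finset.sum_congr rfl h2, ← Finset.sum_mul, pw_conv ha he]

lemma lintegral_abs_rpow (e p : ℝ) :
    ∫⁻ x, ENNReal.ofReal |x| ^ p ∂(poissonReal e)
      = ∑' k : ℕ, pw e k * ENNReal.ofReal ((k : ℕ) : ℝ) ^ p := by
  rw [poissonReal_eq, lintegral_sum_measure]
  simp only [lintegral_smul_measure, lintegral_dirac, smul_eq_mul]
  exact tsum_congr fun k => by rw [abs_of_nonneg (Nat.cast_nonneg k)]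

lemma lintegral_cost {a : ℝ} (e p : ℝ) (ha : 0 ≤ a) :
    ∫⁻ z : ℝ × ℝ, ENNReal.ofReal |z.1 - z.2| ^ p ∂(cpl a e)
      = ∫⁻ x, ENNReal.ofReal |x| ^ p ∂(poissonReal e) := by
  rw [lintegral_abs_rpow, cpl, lintegral_sum_measure]
  simp only [lintegral_smul_measure, lintegral_dirac, smul_eq_mul]
  have habs : ∀ jk : ℕ × ℕ, |((jk.1 : ℕ) : ℝ) - ((jk.1 + jk.2 : ℕ) : ℝ)| = ((jk.2 : ℕ) : ℝ) := by
    intro jk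
    push_cast
    rw [show ((jk.1 : ℝ)) - ((jk.1 : ℝ) + jk.2) = -(jk.2 : ℝ) by ring, abs_neg,
      abs_of_nonneg (Nat.cast_nonneg _)]
  have h : ∀ jk : ℕ × ℕ,
      pw a jk.1 * pw e jk.2
          * ENNReal.ofReal |((jk.1 : ℕ) : ℝ) - ((jk.1 + jk.2 : ℕ) : ℝ)| ^ p
        = pw a jk.1 * (pw e jk.2 * ENNReal.ofReal ((jk.2 : ℕ) : ℝ) ^ p) := fun jk => by
    rw [habs jk]; ring
  rw [tsum_congr h, ENNReal.tsum_prod']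
  have h2 : ∀ j : ℕ,
      ∑' k : ℕ, pw a j * (pw e k * ENNReal.ofReal ((k : ℕ) : ℝ) ^ p)
        = pw a j * ∑' k : ℕ, pw e k * ENNReal.ofReal ((k : ℕ) : ℝ) ^ p := fun j =>
    ENNReal.tsum_mul_left
  rw [tsum_congr h2, ENNReal.tsum_mul_right, tsum_pw ha, one_mul]

lemma cost_measurable (p : ℝ) :
    Measurable fun z : ℝ × ℝ => ENNReal.ofReal |z.1 - z.2| ^ p :=
  ((measurable_fst.sub measurable_snd).abs.ennreal_ofReal).pow_const p

lemma wp_le {p a e : ℝ} (hp : 1 ≤ p) (ha : 0 ≤ a) (he : 0 ≤ e) :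
    wasserstein p (poissonReal a) (poissonReal (a + e)) ^ p
        ≤ ∫⁻ x, ENNReal.ofReal |x| ^ p ∂(poissonReal e)
      ∧ wasserstein p (poissonReal (a + e)) (poissonReal a) ^ p
        ≤ ∫⁻ x, ENNReal.ofReal |x| ^ p ∂(poissonReal e) := by
  have hp0 : (0 : ℝ) < p := lt_of_lt_of_le one_pos hp
  set I := ∫⁻ x, ENNReal.ofReal |x| ^ p ∂(poissonReal e) with hI
  have hpow : ∀ W : ℝ≥0∞, W ≤ I ^ (1 / p) → W ^ p ≤ I := by
    intro W h
    calc W ^ p ≤ (I ^ (1 / p)) ^ p := ENNReal.rpow_le_rpow h hp0.le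
      _ = I := by
        rw [← ENNReal.rpow_mul, one_div_mul_cancel hp0.ne', ENNReal.rpow_one]
  constructor
  · refine hpow _ ?_
    rw [wasserstein, wassersteinCost]
    have hmem : cpl a e ∈ {π : Measure (ℝ × ℝ) |
        IsProbabilityMeasure π ∧ π.map Prod.fst = poissonReal a
          ∧ π.map Prod.snd = poissonReal (a + e)} :=
      ⟨cpl_prob ha he, cpl_map_fst ha he, cpl_map_snd ha he⟩
    refine le_trans (iInf₂_le _ hmem) ?_
    exact le_of_eq (by rw [lintegral_cost e p ha])
  · refine hpow _ ?_
    rw [wasserstein, wassersteinCost]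
    have hprob : IsProbabilityMeasure ((cpl a e).map Prod.swap) := by
      have := cpl_prob ha he
      exact Measure.isProbabilityMeasure_map measurable_swap.aemeasurable
    have hf : ((cpl a e).map Prod.swap).map Prod.fst = poissonReal (a + e) := by
      rw [Measure.map_map measurable_fst measurable_swap]
      exact cpl_map_snd ha he
    have hsnd : ((cpl a e).map Prod.swap).map Prod.snd = poissonReal a := by
      rw [Measure.map_map measurable_snd measurable_swap]
      exact cpl_map_fst ha he
    have hmem : (cpl a e).map Prod.swap ∈ {π : Measure (ℝ × ℝ) |
        IsProbabilityMeasure π ∧ π.map Prod.fst = poissonReal (a + e)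
          ∧ π.map Prod.snd = poissonReal a} := ⟨hprob, hf, hsnd⟩
    refine le_trans (iInf₂_le _ hmem) ?_
    refine le_of_eq ?_
    rw [lintegral_map (cost_measurable p) measurable_swap]
    have : ∀ z : ℝ × ℝ, ENNReal.ofReal |(Prod.swap z).1 - (Prod.swap z).2| ^ p
        = ENNReal.ofReal |z.1 - z.2| ^ p := fun z => by
      rw [Prod.fst_swap, Prod.snd_swap, abs_sub_comm]
    rw [lintegral_congr this, lintegral_cost e p ha]

lemma lint_one {c : ℝ} (hc : 0 ≤ c) :
    ∫⁻ x, ENNReal.ofReal |x| ^ (1 : ℝ) ∂(poissonReal c) = ENNReal.ofReal c := by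
  rw [lintegral_abs_rpow]
  have h : ∀ k : ℕ, pw c k * ENNReal.ofReal ((k : ℕ) : ℝ) ^ (1 : ℝ)
      = pw c k * ENNReal.ofReal ((k : ℕ) : ℝ) := fun k => by rw [ENNReal.rpow_one]
  rw [tsum_congr h, tsum_pw_mul hc]

lemma lint_two {c : ℝ} (hc : 0 ≤ c) :
    ∫⁻ x, ENNReal.ofReal |x| ^ (2 : ℝ) ∂(poissonReal c) = ENNReal.ofReal (c + c ^ 2) := by
  rw [lintegral_abs_rpow]
  have h : ∀ k : ℕ, pw c k * ENNReal.ofReal ((k : ℕ) : ℝ) ^ (2 : ℝ)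
      = pw c k * ENNReal.ofReal (((k : ℕ) : ℝ) ^ 2) := fun k => by
    rw [ENNReal.ofReal_rpow_of_nonneg (Nat.cast_nonneg k) (by norm_num), Real.rpow_two]
  rw [tsum_congr h, tsum_pw_mul_sq hc]

lemma moment_le {p c : ℝ} (hp1 : 1 < p) (hp2 : p ≤ 2) (hc : 0 ≤ c) :
    ∫⁻ x, ENNReal.ofReal |x| ^ p ∂(poissonReal c)
      ≤ ENNReal.ofReal c + ENNReal.ofReal (c ^ p) := by
  set A := ENNReal.ofReal c with hA
  by_cases hp2' : p = 2
  · subst hp2'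
    rw [lint_two hc, ENNReal.ofReal_add hc (sq_nonneg c), Real.rpow_two]
  · have hplt : p < 2 := lt_of_le_of_ne hp2 hp2'
    have h2p : (0 : ℝ) < 2 - p := by linarith
    have hp1' : (0 : ℝ) < p - 1 := by linarith
    have hconj : (1 / (2 - p)).HolderConjugate (1 / (p - 1)) := by
      rw [Real.holderConjugate_iff]; constructor
      · rw [lt_div_iff₀ h2p]; linarith
      · rw [one_div, inv_inv, one_div, inv_inv]; ring
    set f : ℝ → ℝ≥0∞ := fun x => ENNReal.ofReal |x| ^ (2 - p) with hf
    set g : ℝ → ℝ≥0∞ := fun x => ENNReal.ofReal |x| ^ (2 * (p - 1)) with hg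
    have hfm : Measurable f := (measurable_abs.ennreal_ofReal).pow_const _
    have hgm : Measurable g := (measurable_abs.ennreal_ofReal).pow_const _
    have hsplit : ∀ x : ℝ, ENNReal.ofReal |x| ^ p = (f * g) x := fun x => by
      simp only [hf, hg, Pi.mul_apply]
      rw [← ENNReal.rpow_add_of_nonneg _ _ h2p.le (by linarith)]
      congr 1; ring
    have hH := ENNReal.lintegral_mul_le_Lp_mul_Lq (poissonReal c) hconj
      hfm.aemeasurable hgm.aemeasurable
    have hfp : ∫⁻ x, f x ^ (1 / (2 - p)) ∂(poissonReal c) = A := by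
      have : ∀ x : ℝ, f x ^ (1 / (2 - p)) = ENNReal.ofReal |x| ^ (1 : ℝ) := fun x => by
        rw [hf, ← ENNReal.rpow_mul, mul_one_div_cancel h2p.ne']
      rw [lintegral_congr this, lint_one hc]
    have hgq : ∫⁻ x, g x ^ (1 / (p - 1)) ∂(poissonReal c)
        = ENNReal.ofReal (c + c ^ 2) := by
      have : ∀ x : ℝ, g x ^ (1 / (p - 1)) = ENNReal.ofReal |x| ^ (2 : ℝ) := fun x => by
        rw [hg, ← ENNReal.rpow_mul]
        congr 1
        field_simp
      rw [lintegral_congr this, lint_two hc]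
    have hmain : ∫⁻ x, ENNReal.ofReal |x| ^ p ∂(poissonReal c)
        ≤ A ^ (2 - p) * (ENNReal.ofReal (c + c ^ 2)) ^ (p - 1) := by
      calc ∫⁻ x, ENNReal.ofReal |x| ^ p ∂(poissonReal c)
          = ∫⁻ x, (f * g) x ∂(poissonReal c) := lintegral_congr hsplit
        _ ≤ (∫⁻ x, f x ^ (1 / (2 - p)) ∂(poissonReal c)) ^ (1 / (1 / (2 - p)))
            * (∫⁻ x, g x ^ (1 / (p - 1)) ∂(poissonReal c)) ^ (1 / (1 / (p - 1))) := hH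
        _ = A ^ (2 - p) * (ENNReal.ofReal (c + c ^ 2)) ^ (p - 1) := by
            rw [hfp, hgq, one_div_one_div, one_div_one_div]
    refine le_trans hmain ?_
    have hsum : ENNReal.ofReal (c + c ^ 2) = A * (1 + A) := by
      rw [ENNReal.ofReal_add hc (sq_nonneg c), mul_add, mul_one, hA, sq,
        ← ENNReal.ofReal_mul hc]
    rw [hsum, ENNReal.mul_rpow_of_nonneg _ _ hp1'.le]
    have hle : (1 + A) ^ (p - 1) ≤ 1 + A ^ (p - 1) := by
      calc (1 + A) ^ (p - 1) ≤ 1 ^ (p - 1) + A ^ (p - 1) :=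
            ENNReal.rpow_add_le_add_rpow 1 A hp1'.le (by linarith)
        _ = 1 + A ^ (p - 1) := by rw [ENNReal.one_rpow]
    have hA1 : A ^ (2 - p) * A ^ (p - 1) = A := by
      rw [← ENNReal.rpow_add_of_nonneg _ _ h2p.le hp1'.le,
        show (2 - p) + (p - 1) = 1 by ring, ENNReal.rpow_one]
    have hA2 : A * A ^ (p - 1) = A ^ p := by
      nth_rewrite 1 [← ENNReal.rpow_one A]
      rw [← ENNReal.rpow_add_of_nonneg _ _ zero_le_one hp1'.le]
      congr 1; ring
    calc A ^ (2 - p) * (A ^ (p - 1) * (1 + A) ^ (p - 1))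
        ≤ A ^ (2 - p) * (A ^ (p - 1) * (1 + A ^ (p - 1))) := by
          exact mul_le_mul_right (mul_le_mul_right hle _) _
      _ = A + A ^ p := by rw [← mul_assoc, hA1, mul_add, mul_one, hA2]
      _ = ENNReal.ofReal c + ENNReal.ofReal (c ^ p) := by
          rw [hA, ENNReal.ofReal_rpow_of_nonneg hc (by linarith)]

end Statement7Aux

/-- Wasserstein distances between Poisson distributions: the `p`-th power
of `W_p` is bounded by the `p`-th moment of a Poisson variable of mean `|λ - λ'|`. -/
theorem statement7 (p lam lam' : ℝ) (hp : 1 ≤ p) (hlam : 0 ≤ lam) (hlam' : 0 ≤ lam') :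
    (wasserstein p (poissonReal lam) (poissonReal lam') ^ p
        ≤ ∫⁻ x, ENNReal.ofReal |x| ^ p ∂(poissonReal |lam - lam'|))
    ∧ (wasserstein 1 (poissonReal lam) (poissonReal lam') ≤ ENNReal.ofReal |lam - lam'|)
    ∧ (1 < p → p ≤ 2 →
        wasserstein p (poissonReal lam) (poissonReal lam') ^ p
          ≤ ENNReal.ofReal |lam - lam'| + ENNReal.ofReal (|lam - lam'| ^ p)) := by
  classical
  obtain ⟨hl, hkey⟩ : 0 ≤ |lam - lam'| ∧ ∀ q : ℝ, 1 ≤ q →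
      wasserstein q (poissonReal lam) (poissonReal lam') ^ q
        ≤ ∫⁻ x, ENNReal.ofReal |x| ^ q ∂(poissonReal |lam - lam'|) := by
    refine ⟨abs_nonneg _, fun q hq => ?_⟩
    rcases le_total lam lam' with h | h
    · have hb := (Statement7Aux.wp_le hq hlam (by linarith : (0:ℝ) ≤ lam' - lam)).1
      rw [show lam + (lam' - lam) = lam' by ring] at hb
      rwa [show |lam - lam'| = lam' - lam by
        rw [abs_sub_comm, abs_of_nonneg (by linarith)]]
    · have hb := (Statement7Aux.wp_le hq hlam' (by linarith : (0:ℝ) ≤ lam - lam')).2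
      rw [show lam' + (lam - lam') = lam by ring] at hb
      rwa [show |lam - lam'| = lam - lam' by rw [abs_of_nonneg (by linarith)]]
  refine ⟨hkey p hp, ?_, ?_⟩
  · have h1 := hkey 1 le_rfl
    rw [ENNReal.rpow_one, Statement7Aux.lint_one hl] at h1
    exact h1
  · intro hp1 hp2
    exact le_trans (hkey p hp) (Statement7Aux.moment_le hp1 hp2 hl)
end

section
/- There exists a constant K > 0 such that for all t > 0 and all ε > 0 the following lower bound holds: if P and Q are independent Poisson random variables each of mean t/(2ε²), and Y_t(ε) := ε(P − Q) (the marginal at time t of the pure-jump Lévy process with Lévy measure (δ_{−ε} + δ_ε)/(2ε²)), then W_1(law of Y_t(ε), N(0, t)) ≥ K · min(√t, ε). -/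
open MeasureTheory ProbabilityTheory
open scoped ENNReal NNReal

noncomputable def gg (y : ℝ) : ℝ := min (Int.fract y) (1 - Int.fract y)

lemma gg_nonneg (y : ℝ) : 0 ≤ gg y := by
  have h1 := Int.fract_nonneg y
  have h2 := Int.fract_lt_one y
  simp only [gg, le_min_iff]
  constructor <;> linarith

lemma gg_le_half (y : ℝ) : gg y ≤ 1/2 := by
  rcases le_or_gt (Int.fract y) (1/2) with h | h
  · exact (min_le_left _ _).trans h
  · exact (min_le_right _ _).trans (by linarith)

lemma gg_eq_infDist (y : ℝ) : gg y = Metric.infDist y (Set.range ((↑) : ℤ → ℝ)) := by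
  have hfl : (⌊y⌋ : ℝ) ∈ Set.range ((↑) : ℤ → ℝ) := ⟨⌊y⌋, rfl⟩
  have hcl : ((⌊y⌋ + 1 : ℤ) : ℝ) ∈ Set.range ((↑) : ℤ → ℝ) := ⟨⌊y⌋ + 1, rfl⟩
  have h2 := Int.fract_lt_one y
  have h1 := Int.fract_nonneg y
  apply le_antisymm
  · refine le_of_not_gt fun hlt => ?_
    obtain ⟨z, ⟨n, rfl⟩, hz⟩ := (Metric.infDist_lt_iff ⟨_, hfl⟩).mp hlt
    rw [Real.dist_eq] at hz
    rcases le_or_gt (n : ℝ) (⌊y⌋ : ℝ) with hn | hn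
    · have hsf := Int.self_sub_floor y
      have : Int.fract y ≤ y - n := by linarith
      have : gg y ≤ |y - n| := le_trans (min_le_left _ _) (this.trans (le_abs_self _))
      linarith
    · have hn' : (⌊y⌋ : ℝ) + 1 ≤ n := by exact_mod_cast Int.lt_iff_add_one_le.mp (by exact_mod_cast hn)
      have hsf := Int.self_sub_floor y
      have hle : 1 - Int.fract y ≤ n - y := by linarith
      have habs : n - y ≤ |y - n| := by rw [abs_sub_comm]; exact le_abs_self _
      have : gg y ≤ |y - n| := (min_le_right _ _).trans (hle.trans habs)
      linarith
  · rcases le_total (Int.fract y) (1 - Int.fract y) with h | h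
    · rw [gg, min_eq_left h]
      refine (Metric.infDist_le_dist_of_mem hfl).trans ?_
      rw [Real.dist_eq, Int.self_sub_floor, abs_of_nonneg h1]
    · rw [gg, min_eq_right h]
      refine (Metric.infDist_le_dist_of_mem hcl).trans ?_
      rw [Real.dist_eq]
      push_cast
      rw [show y - ((⌊y⌋ : ℝ) + 1) = Int.fract y - 1 by rw [Int.fract]; ring, abs_of_nonpos (by linarith)]
      linarith

lemma gg_lip (a b : ℝ) : |gg a - gg b| ≤ |a - b| := by
  rw [gg_eq_infDist, gg_eq_infDist, ← Real.dist_eq, ← Real.dist_eq]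
  simpa using (Metric.lipschitz_infDist_pt (Set.range ((↑) : ℤ → ℝ))).dist_le_mul a b

lemma gg_continuous : Continuous gg := by
  rw [funext gg_eq_infDist]
  exact Metric.continuous_infDist_pt _

lemma gg_intCast (n : ℤ) : gg (n : ℝ) = 0 := by
  simp [gg, Int.fract_intCast]

lemma gg_periodic : Function.Periodic gg 1 := by
  intro y; simp [gg, Int.fract_add_one]

lemma gg_of_mem (y : ℝ) (h0 : 0 ≤ y) (h1 : y ≤ 1/2) : gg y = y := by
  rw [gg, Int.fract_eq_self.mpr ⟨h0, by linarith⟩, min_eq_left (by linarith)]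

lemma integral_gg : ∫ y in (0:ℝ)..1, gg y = 1/4 := by
  have hi : ∀ a b : ℝ, IntervalIntegrable gg volume a b :=
    fun a b => gg_continuous.intervalIntegrable a b
  have hsplit := intervalIntegral.integral_add_adjacent_intervals (μ := volume) (hi 0 (1/2)) (hi (1/2) 1)
  rw [← hsplit]
  have e1 : ∫ y in (0:ℝ)..(1/2), gg y = ∫ y in (0:ℝ)..(1/2), y := by
    refine intervalIntegral.integral_congr fun y hy => ?_
    rw [Set.uIcc_of_le (by norm_num)] at hy
    exact gg_of_mem y hy.1 hy.2
  have e2 : ∫ y in (1/2:ℝ)..1, gg y = ∫ y in (1/2:ℝ)..1, (1 - y) := by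
    refine intervalIntegral.integral_congr fun y hy => ?_
    rw [Set.uIcc_of_le (by norm_num)] at hy
    rcases eq_or_lt_of_le hy.2 with h | h
    · subst h; simpa using gg_intCast 1
    · rw [gg, Int.fract_eq_self.mpr ⟨by linarith [hy.1], h⟩, min_eq_right (by linarith [hy.1])]
  have hid : ∀ a b : ℝ, IntervalIntegrable (fun y : ℝ => y) volume a b :=
    fun a b => continuous_id.intervalIntegrable a b
  rw [e1, e2, intervalIntegral.integral_sub intervalIntegrable_const (hid _ _),
    integral_id, integral_id, intervalIntegral.integral_const]
  norm_num

lemma sqrt_two_pi_le : Real.sqrt (2 * Real.pi) ≤ 3 := by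
  have h := Real.pi_le_four
  have h2 := Real.sq_sqrt (by positivity : (0:ℝ) ≤ 2 * Real.pi)
  have h3 := Real.sqrt_nonneg (2 * Real.pi)
  nlinarith

lemma half_le_exp : (1/2 : ℝ) ≤ Real.exp (-(1/2)) := by
  have h : Real.exp (1/2) * Real.exp (1/2) = Real.exp 1 := by
    rw [← Real.exp_add]; norm_num
  have h1 := Real.exp_one_lt_d9
  have h2 := Real.exp_pos (1/2)
  have hle : Real.exp (1/2) ≤ 2 := by nlinarith
  rw [Real.exp_neg]
  rw [le_inv_comm₀ (by norm_num) h2]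
  linarith

lemma pdf_lb {t : ℝ} (ht : 0 < t) {x : ℝ} (hx : 0 ≤ x) (hx2 : x ≤ Real.sqrt t) :
    (Real.sqrt (2 * Real.pi) * Real.sqrt t)⁻¹ * Real.exp (-(1/2) : ℝ)
      ≤ gaussianPDFReal 0 t.toNNReal x := by
  rw [gaussianPDFReal]
  have hco : ((t.toNNReal : ℝ≥0) : ℝ) = t := Real.coe_toNNReal _ ht.le
  rw [hco]
  have hsq : x ^ 2 ≤ t := by
    have := pow_le_pow_left₀ hx hx2 2
    rwa [Real.sq_sqrt ht.le] at this
  have he : Real.exp (-(1/2) : ℝ) ≤ Real.exp (-(x - 0)^2 / (2*t)) := by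
    apply Real.exp_le_exp.mpr
    rw [sub_zero]
    have h5 : x^2/(2*t) ≤ 1/2 := by rw [div_le_iff₀ (by positivity)]; nlinarith
    have h6 : -x^2/(2*t) = -(x^2/(2*t)) := by ring
    rw [h6]; linarith
  have hrs : Real.sqrt (2 * Real.pi * t) = Real.sqrt (2 * Real.pi) * Real.sqrt t := by
    rw [← Real.sqrt_mul (by positivity)]
  rw [hrs]
  exact mul_le_mul_of_nonneg_left he (by positivity)

lemma gauss_lb (t ε : ℝ) (ht : 0 < t) (hε : 0 < ε) :
    (1/200 : ℝ) * min (Real.sqrt t) ε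
      ≤ ∫ x, ε * gg (x / ε) ∂(gaussianReal 0 t.toNNReal) := by
  set s := Real.sqrt t with hs
  have hspos : 0 < s := Real.sqrt_pos.mpr ht
  set φ := gaussianPDFReal 0 t.toNNReal with hφ
  set f : ℝ → ℝ := fun x => ε * gg (x / ε) with hfdef
  set A := Real.sqrt (2 * Real.pi) with hA
  have hApos : 0 < A := Real.sqrt_pos.mpr (by positivity)
  have hA3 : A ≤ 3 := sqrt_two_pi_le
  set c : ℝ := (A * s)⁻¹ * Real.exp (-(1/2) : ℝ) with hc
  have hcpos : 0 < c := by positivity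
  have hE : (1/2 : ℝ) ≤ Real.exp (-(1/2)) := half_le_exp
  have hvne : t.toNNReal ≠ 0 := by
    simp only [ne_eq, Real.toNNReal_eq_zero, not_le]; exact ht
  have hfnn : ∀ x, 0 ≤ f x := fun x => mul_nonneg hε.le (gg_nonneg _)
  have hφnn : ∀ x, 0 ≤ φ x := fun x => gaussianPDFReal_nonneg _ _ _
  have hfbd : ∀ x, ‖f x‖ ≤ ε/2 := by
    intro x
    rw [Real.norm_eq_abs, abs_of_nonneg (hfnn x)]
    calc ε * gg (x/ε) ≤ ε * (1/2) := mul_le_mul_of_nonneg_left (gg_le_half _) hε.le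
    _ = ε/2 := by ring
  have hfcont : Continuous f := continuous_const.mul (gg_continuous.comp (continuous_id.div_const ε))
  have hφmeas := measurable_gaussianPDFReal 0 t.toNNReal
  have hφint : Integrable φ := integrable_gaussianPDFReal 0 t.toNNReal
  have hrw : ∫ x, f x ∂(gaussianReal 0 t.toNNReal) = ∫ x, φ x * f x := by
    rw [gaussianReal_of_var_ne_zero _ hvne]
    have h1 : gaussianPDF 0 t.toNNReal = fun x => (((fun y => (φ y).toNNReal) x : ℝ≥0) : ℝ≥0∞) := rfl
    rw [h1, integral_withDensity_eq_integral_smul (hφmeas.real_toNNReal) f]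
    congr 1; ext x
    simp [NNReal.smul_def, Real.coe_toNNReal _ (hφnn x)]; exact Or.inl (max_eq_left (hφnn x))
  have hint : Integrable (fun x => φ x * f x) := by
    refine Integrable.mono' (hφint.const_mul (ε/2))
      (hφmeas.aestronglyMeasurable.mul hfcont.aestronglyMeasurable)
      (ae_of_all _ fun x => ?_)
    rw [Real.norm_eq_abs, abs_mul, abs_of_nonneg (hφnn x)]
    calc φ x * |f x| ≤ φ x * (ε/2) :=
      mul_le_mul_of_nonneg_left ((Real.norm_eq_abs _ ▸ hfbd x)) (hφnn x)
    _ = ε/2 * φ x := mul_comm _ _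
  rw [hrw]
  have hstep1 : ∀ a b : ℝ, ∫ x in Set.Icc a b, φ x * f x ≤ ∫ x, φ x * f x := fun a b =>
    setIntegral_le_integral hint (ae_of_all _ fun x => mul_nonneg (hφnn x) (hfnn x))
  rcases le_total ε s with hcase | hcase
  · -- many periods case : min = ε
    rw [min_eq_right hcase]
    set n : ℤ := ⌊s / ε⌋ with hn
    have hn1 : (1:ℤ) ≤ n := Int.le_floor.mpr (by rw [Int.cast_one, le_div_iff₀ hε]; linarith)
    have hn1R : (1:ℝ) ≤ (n:ℝ) := by exact_mod_cast hn1
    have hnnn : (0:ℝ) ≤ (n:ℝ) := by linarith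
    have hfl := Int.floor_le (s / ε)
    have hnε : (n:ℝ) * ε ≤ s := by
      calc (n:ℝ) * ε ≤ s / ε * ε := mul_le_mul_of_nonneg_right hfl hε.le
      _ = s := div_mul_cancel₀ _ hε.ne'
    have hlf := Int.lt_floor_add_one (s / ε)
    have hεn : s / 2 ≤ ε * (n:ℝ) := by
      have hsd : s < ((n:ℝ) + 1) * ε := by
        rw [← div_lt_iff₀ hε]; exact_mod_cast hlf
      nlinarith
    have hbnn : 0 ≤ (n:ℝ) * ε := by positivity
    -- integral of f over [0, nε]
    have hIf : ∫ x in (0:ℝ)..((n:ℝ)*ε), f x = ε * (ε * ((n:ℝ)/4)) := by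
      rw [hfdef]
      simp only []
      rw [intervalIntegral.integral_const_mul]
      rw [intervalIntegral.integral_comp_div (f := gg) hε.ne']
      rw [zero_div, mul_div_assoc, div_self hε.ne', mul_one]
      have hper := gg_periodic.intervalIntegral_add_zsmul_eq n 0
        (fun a b => gg_continuous.intervalIntegrable a b)
      simp only [zero_add, zsmul_eq_mul, Int.cast_one, mul_one] at hper
      rw [hper, integral_gg, smul_eq_mul]
      ring
    -- pointwise bound on [0, nε]
    have hmono : ∫ x in Set.Icc (0:ℝ) ((n:ℝ)*ε), c * f x
        ≤ ∫ x in Set.Icc (0:ℝ) ((n:ℝ)*ε), φ x * f x := by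
      refine setIntegral_mono_on ((continuous_const.mul hfcont).integrableOn_Icc)
        (hint.integrableOn) measurableSet_Icc (fun x hx => ?_)
      exact mul_le_mul_of_nonneg_right (pdf_lb ht hx.1 (hx.2.trans hnε)) (hfnn x)
    have hconst : ∫ x in Set.Icc (0:ℝ) ((n:ℝ)*ε), c * f x = c * (ε * (ε * ((n:ℝ)/4))) := by
      rw [integral_Icc_eq_integral_Ioc, ← intervalIntegral.integral_of_le hbnn,
        intervalIntegral.integral_const_mul, hIf]
    have hfinal : (1/200:ℝ) * ε ≤ c * (ε * (ε * ((n:ℝ)/4))) := by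
      rw [hc]
      rw [show (A*s)⁻¹ * Real.exp (-(1/2):ℝ) * (ε * (ε * ((n:ℝ)/4)))
        = (Real.exp (-(1/2):ℝ) * (ε * (ε * ((n:ℝ)/4)))) / (A*s) by ring]
      rw [le_div_iff₀ (by positivity)]
      nlinarith [mul_le_mul_of_nonneg_left hεn hε.le,
        mul_nonneg (mul_nonneg hε.le hε.le) hnnn,
        mul_nonneg (mul_nonneg hε.le hspos.le) (by linarith : (0:ℝ) ≤ 3 - A),
        mul_nonneg (mul_nonneg hε.le hε.le) (mul_nonneg hnnn (by linarith : (0:ℝ) ≤ Real.exp (-(1/2)) - 1/2))]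
    calc (1/200:ℝ) * ε ≤ c * (ε * (ε * ((n:ℝ)/4))) := hfinal
    _ = ∫ x in Set.Icc (0:ℝ) ((n:ℝ)*ε), c * f x := hconst.symm
    _ ≤ ∫ x in Set.Icc (0:ℝ) ((n:ℝ)*ε), φ x * f x := hmono
    _ ≤ ∫ x, φ x * f x := hstep1 _ _
  · -- big epsilon case : min = s
    rw [min_eq_left hcase]
    have hmono : ∫ x in Set.Icc (s/4) (s/2), c * (s/4)
        ≤ ∫ x in Set.Icc (s/4) (s/2), φ x * f x := by
      refine setIntegral_mono_on ((integrableOn_const_iff).mpr (Or.inr (by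
        rw [Real.volume_Icc]; exact ENNReal.ofReal_lt_top)))
        (hint.integrableOn) measurableSet_Icc (fun x hx => ?_)
      have hx0 : 0 ≤ x := le_trans (by positivity) hx.1
      have hxs : x ≤ s := hx.2.trans (by linarith)
      have hfx : f x = x := by
        rw [hfdef]
        simp only []
        rw [gg_of_mem (x/ε) (by positivity) (by
          rw [div_le_iff₀ hε]
          have := hx.2
          linarith)]
        field_simp
      refine mul_le_mul (pdf_lb ht hx0 hxs) (by rw [hfx]; exact hx.1) (by positivity) (hφnn x)
    have hconst : ∫ x in Set.Icc (s/4) (s/2), c * (s/4) = (s/4) * (c * (s/4)) := by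
      rw [setIntegral_const, measureReal_def, Real.volume_Icc, smul_eq_mul,
        ENNReal.toReal_ofReal (by linarith)]
      ring_nf
    have hfinal : (1/200:ℝ) * s ≤ (s/4) * (c * (s/4)) := by
      rw [hc]
      rw [show (s/4) * ((A*s)⁻¹ * Real.exp (-(1/2):ℝ) * (s/4))
        = (s * Real.exp (-(1/2):ℝ) * s / 16) / (A*s) by ring]
      rw [le_div_iff₀ (by positivity)]
      nlinarith [mul_nonneg (mul_nonneg hspos.le hspos.le) (by linarith : (0:ℝ) ≤ Real.exp (-(1/2)) - 1/2),
        mul_nonneg (mul_nonneg hspos.le hspos.le) (by linarith : (0:ℝ) ≤ 3 - A)]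
    calc (1/200:ℝ) * s ≤ (s/4) * (c * (s/4)) := hfinal
    _ = ∫ x in Set.Icc (s/4) (s/2), c * (s/4) := hconst.symm
    _ ≤ ∫ x in Set.Icc (s/4) (s/2), φ x * f x := hmono
    _ ≤ ∫ x, φ x * f x := hstep1 _ _


/-- Lower bound for the `W_1` distance between `ε(P - Q)` (with `P, Q`
independent Poisson of mean `t/(2ε²)`) and a centred Gaussian of variance `t`. -/
theorem statement10 :
    ∃ K > (0 : ℝ), ∀ (t ε : ℝ), 0 < t → 0 < ε →
      ∀ (Ω : Type) (_ : MeasurableSpace Ω) (P : Measure Ω) (_ : IsProbabilityMeasure P)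
        (Np Nq : Ω → ℕ), Measurable Np → Measurable Nq →
        P.map Np = poissonNat (t / (2 * ε ^ 2)) →
        P.map Nq = poissonNat (t / (2 * ε ^ 2)) →
        IndepFun Np Nq P →
        ENNReal.ofReal (K * min (Real.sqrt t) ε)
          ≤ wasserstein 1 (P.map (fun ω => ε * ((Np ω : ℝ) - (Nq ω : ℝ))))
              (gaussianReal 0 (Real.toNNReal t)) := by
  refine ⟨1/200, by norm_num, ?_⟩
  intro t ε ht hε Ω mΩ P hP Np Nq hNp hNq hmapP hmapQ hindep
  set f : ℝ → ℝ := fun x => ε * gg (x / ε) with hfdef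
  have hfcont : Continuous f :=
    continuous_const.mul (gg_continuous.comp (continuous_id.div_const ε))
  have hfnn : ∀ x, 0 ≤ f x := fun x => mul_nonneg hε.le (gg_nonneg _)
  have hfbd : ∀ x, ‖f x‖ ≤ ε/2 := by
    intro x
    rw [Real.norm_eq_abs, abs_of_nonneg (hfnn x)]
    calc ε * gg (x/ε) ≤ ε * (1/2) := mul_le_mul_of_nonneg_left (gg_le_half _) hε.le
    _ = ε/2 := by ring
  have hflip : ∀ a b : ℝ, |f a - f b| ≤ |a - b| := by
    intro a b
    rw [hfdef]
    simp only []
    rw [← mul_sub, abs_mul, abs_of_nonneg hε.le]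
    calc ε * |gg (a/ε) - gg (b/ε)| ≤ ε * |a/ε - b/ε| :=
      mul_le_mul_of_nonneg_left (gg_lip _ _) hε.le
    _ = ε * (|a - b| / ε) := by rw [← sub_div, abs_div, abs_of_nonneg hε.le]
    _ = |a - b| := by field_simp
  rw [wasserstein, wassersteinCost]
  refine le_iInf₂ fun π hπ => ?_
  obtain ⟨hπP, hfst, hsnd⟩ := hπ
  haveI := hπP
  simp only [one_div, inv_one, ENNReal.rpow_one]
  have hmapmeas : Measurable fun ω => ε * ((Np ω : ℝ) - (Nq ω : ℝ)) := by
    measurability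
  have hμ0 : ∫ x, f x ∂(P.map (fun ω => ε * ((Np ω : ℝ) - (Nq ω : ℝ)))) = 0 := by
    rw [integral_map hmapmeas.aemeasurable hfcont.aestronglyMeasurable]
    have hz : ∀ ω : Ω, f (ε * ((Np ω : ℝ) - (Nq ω : ℝ))) = 0 := by
      intro ω
      have h1 : (ε * ((Np ω : ℝ) - (Nq ω : ℝ))) / ε = (((Np ω : ℤ) - (Nq ω : ℤ) : ℤ) : ℝ) := by
        push_cast
        field_simp
      rw [hfdef]
      simp only []
      rw [h1, gg_intCast, mul_zero]
    simp only [hz, integral_zero]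
  have h2 : Integrable (fun z : ℝ × ℝ => f z.2) π :=
    Integrable.mono' (integrable_const (ε/2))
      ((hfcont.comp continuous_snd).aestronglyMeasurable) (ae_of_all _ fun z => hfbd _)
  have h1 : Integrable (fun z : ℝ × ℝ => f z.1) π :=
    Integrable.mono' (integrable_const (ε/2))
      ((hfcont.comp continuous_fst).aestronglyMeasurable) (ae_of_all _ fun z => hfbd _)
  have hkey : ∫ z : ℝ × ℝ, (f z.2 - f z.1) ∂π
      = ∫ x, f x ∂(gaussianReal 0 (Real.toNNReal t)) := by
    rw [integral_sub h2 h1]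
    have e1 : ∫ z : ℝ × ℝ, f z.2 ∂π = ∫ x, f x ∂(gaussianReal 0 (Real.toNNReal t)) := by
      rw [← hsnd, integral_map measurable_snd.aemeasurable hfcont.aestronglyMeasurable]
    have e2 : ∫ z : ℝ × ℝ, f z.1 ∂π = 0 := by
      rw [← hμ0, ← hfst, integral_map measurable_fst.aemeasurable hfcont.aestronglyMeasurable]
    rw [e1, e2, sub_zero]
  have hglb := gauss_lb t ε ht hε
  calc ENNReal.ofReal ((200:ℝ)⁻¹ * min (Real.sqrt t) ε)
      ≤ ENNReal.ofReal (∫ z : ℝ × ℝ, (f z.2 - f z.1) ∂π) := by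
        apply ENNReal.ofReal_le_ofReal
        rw [hkey]
        linarith [hglb]
    _ ≤ ‖∫ z : ℝ × ℝ, (f z.2 - f z.1) ∂π‖ₑ := by
        rw [Real.enorm_eq_ofReal_abs]
        exact ENNReal.ofReal_le_ofReal (le_abs_self _)
    _ ≤ ∫⁻ z, ‖f z.2 - f z.1‖ₑ ∂π := enorm_integral_le_lintegral_enorm _
    _ ≤ ∫⁻ z, ENNReal.ofReal |z.1 - z.2| ∂π := by
        refine lintegral_mono fun z => ?_
        rw [Real.enorm_eq_ofReal_abs]
        exact ENNReal.ofReal_le_ofReal ((hflip z.2 z.1).trans_eq (abs_sub_comm _ _))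
end

section
/- Let g: ℝ → ℝ be right-continuous of bounded variation, with limit g(−∞) := lim_{x→−∞} g(x), and let F be a class of measurable functions φ: ℝ → ℝ with ‖φ‖_∞ ≤ 1 and φ ∈ L¹(ℝ) such that for every φ ∈ F the function h_φ(t) := ∫_ℝ φ(y)(g(t − y) − g(−∞)) dy is well defined. Then sup_{φ ∈ F} ‖h_φ‖_Lip ≤ ‖g‖_BV, i.e. every h_φ is Lipschitz with Lipschitz constant at most the total variation norm of g. -/
open MeasureTheory ProbabilityTheory
open scoped ENNReal NNReal

lemma sumBound11 (g : ℝ → ℝ) (d x : ℝ) (hd : 0 < d) :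
    ∑' k : ℤ, edist (g ((k : ℝ) * d + x + d)) (g ((k : ℝ) * d + x)) ≤ eVariationOn g Set.univ := by
  have main : ∀ (s : Finset ℤ), ∀ m : ℤ, (∀ k ∈ s, k < m) →
      ∑ k ∈ s, edist (g ((k : ℝ) * d + x + d)) (g ((k : ℝ) * d + x))
        ≤ eVariationOn g (Set.Iic ((m : ℝ) * d + x)) := by
    intro s
    induction s using Finset.induction_on_max with
    | empty => intro m _; simp
    | insert a t hta ih =>
      intro m hm
      have ham : a < m := hm a (Finset.mem_insert_self a t)
      have hnot : a ∉ t := fun h => lt_irrefl a (hta a h)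
      rw [Finset.sum_insert hnot]
      have hia : ((a : ℝ) * d + x) ≤ (a : ℝ) * d + x + d := by linarith
      have h1 : edist (g ((a : ℝ) * d + x + d)) (g ((a : ℝ) * d + x)) ≤
          eVariationOn g (Set.Icc ((a : ℝ) * d + x) ((a : ℝ) * d + x + d)) :=
        eVariationOn.edist_le g ⟨by linarith, le_refl _⟩ ⟨le_refl _, by linarith⟩
      have h2 := ih a (fun k hk => hta k hk)
      calc edist (g ((a : ℝ) * d + x + d)) (g ((a : ℝ) * d + x)) +
            ∑ k ∈ t, edist (g ((k : ℝ) * d + x + d)) (g ((k : ℝ) * d + x))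
          ≤ eVariationOn g (Set.Icc ((a : ℝ) * d + x) ((a : ℝ) * d + x + d)) +
            eVariationOn g (Set.Iic ((a : ℝ) * d + x)) := add_le_add h1 h2
        _ = eVariationOn g (Set.Iic ((a : ℝ) * d + x)) +
            eVariationOn g (Set.Icc ((a : ℝ) * d + x) ((a : ℝ) * d + x + d)) := add_comm _ _
        _ ≤ eVariationOn g (Set.Iic ((a : ℝ) * d + x) ∪
            Set.Icc ((a : ℝ) * d + x) ((a : ℝ) * d + x + d)) :=
            eVariationOn.add_le_union g (fun u hu v hv => le_trans hu hv.1)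
        _ = eVariationOn g (Set.Iic ((a : ℝ) * d + x + d)) := by
            rw [Set.Iic_union_Icc_eq_Iic hia]
        _ ≤ eVariationOn g (Set.Iic ((m : ℝ) * d + x)) := by
            apply eVariationOn.mono
            apply Set.Iic_subset_Iic.2
            have : ((a : ℝ) + 1) ≤ (m : ℝ) := by exact_mod_cast ham
            nlinarith
  rw [ENNReal.tsum_eq_iSup_sum]
  apply iSup_le
  intro s
  obtain ⟨M, hM⟩ := s.exists_le
  exact (main s (M + 1) (fun k hk => lt_of_le_of_lt (hM k hk) (lt_add_one M))).trans
    (eVariationOn.mono g (Set.subset_univ _))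

lemma shiftEst11 (g : ℝ → ℝ) (hg : Measurable g) (d : ℝ) (hd : 0 < d) :
    ∫⁻ x, edist (g (x + d)) (g x) ≤ eVariationOn g Set.univ * ENNReal.ofReal d := by
  set f : ℝ → ℝ≥0∞ := fun x => edist (g (x + d)) (g x) with hf
  have hfm : Measurable f := (hg.comp (measurable_add_const d)).edist hg
  have fd := isAddFundamentalDomain_Ioc hd 0 volume
  rw [fd.lintegral_eq_tsum'' f]
  have hva : ∀ (γ : AddSubgroup.zmultiples d) (x : ℝ), γ +ᵥ x = (γ : ℝ) + x := fun _ _ => rfl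
  simp_rw [hva]
  rw [← lintegral_tsum (f := fun (γ : AddSubgroup.zmultiples d) (x : ℝ) => f ((γ : ℝ) + x))
    (fun γ => (hfm.comp (measurable_const_add ((γ : ℝ)))).aemeasurable)]
  have hbij : Function.Bijective
      (Set.codRestrict (fun n : ℤ => n • d) (AddSubgroup.zmultiples d) fun n =>
        AddSubgroup.zsmul_mem_zmultiples d n) :=
    (Equiv.ofInjective (fun n : ℤ => n • d) (zsmul_left_strictMono hd).injective).bijective
  set e : ℤ ≃ AddSubgroup.zmultiples d := Equiv.ofBijective _ hbij with he
  have hpt : ∀ x : ℝ, ∑' γ : AddSubgroup.zmultiples d, f ((γ : ℝ) + x) ≤ eVariationOn g Set.univ := by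
    intro x
    rw [← Equiv.tsum_eq e (fun γ : AddSubgroup.zmultiples d => f ((γ : ℝ) + x))]
    have : ∀ k : ℤ, ((e k : ℝ)) = (k : ℝ) * d := by
      intro k; simp [he, Equiv.ofBijective, zsmul_eq_mul]
    calc ∑' k : ℤ, f ((e k : ℝ) + x) = ∑' k : ℤ, f ((k : ℝ) * d + x) := by
          apply tsum_congr; intro k; rw [this k]
      _ ≤ eVariationOn g Set.univ := by
          have := sumBound11 g d x hd
          simpa [hf, add_comm, add_left_comm] using this
  calc ∫⁻ x in Set.Ioc 0 (0 + d), ∑' γ : AddSubgroup.zmultiples d, f ((γ : ℝ) + x)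
      ≤ ∫⁻ _ in Set.Ioc 0 (0 + d), eVariationOn g Set.univ :=
        lintegral_mono (fun x => hpt x)
    _ = eVariationOn g Set.univ * volume (Set.Ioc 0 (0 + d)) := setLIntegral_const _ _
    _ = eVariationOn g Set.univ * ENNReal.ofReal d := by
        rw [Real.volume_Ioc]; ring_nf

/-- If `g` is right-continuous of bounded variation with limit `c` at
`-∞`, then for every `φ` with `‖φ‖_∞ ≤ 1`, `φ ∈ L¹`, the function
`h_φ(t) = ∫ φ(y) (g(t - y) - c) dy` is Lipschitz with constant at most `‖g‖_BV`. -/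
theorem statement11 (g : ℝ → ℝ) (hBV : BoundedVariationOn g Set.univ)
    (hrc : ∀ x, ContinuousWithinAt g (Set.Ici x) x)
    (c : ℝ) (hlim : Filter.Tendsto g Filter.atBot (nhds c))
    (F : Set (ℝ → ℝ))
    (hF : ∀ φ ∈ F, Measurable φ ∧ (∀ x, |φ x| ≤ 1) ∧ Integrable φ volume)
    (hwell : ∀ φ ∈ F, ∀ t : ℝ, Integrable (fun y => φ y * (g (t - y) - c)) volume) :
    ∀ φ ∈ F, LipschitzWith (eVariationOn g Set.univ).toNNReal
      (fun t => ∫ y, φ y * (g (t - y) - c)) := by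
  intro φ hφ
  obtain ⟨hφm, hφ1, hφi⟩ := hF φ hφ
  have hg : Measurable g := by
    have hl : LocallyBoundedVariationOn g Set.univ := fun a b _ _ =>
      ne_top_of_le_ne_top hBV (eVariationOn.mono g Set.inter_subset_left)
    obtain ⟨p, q, hp, hq, hpq⟩ := hl.exists_monotoneOn_sub_monotoneOn
    rw [hpq]
    exact ((monotoneOn_univ.1 hp).measurable).sub ((monotoneOn_univ.1 hq).measurable)
  have key : ∀ t s : ℝ, s < t →
      edist (∫ y, φ y * (g (t - y) - c)) (∫ y, φ y * (g (s - y) - c)) ≤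
        eVariationOn g Set.univ * edist t s := by
    intro t s hst
    set d := t - s with hdd
    have hd : 0 < d := sub_pos.2 hst
    have hI : (∫ y, φ y * (g (t - y) - c)) - (∫ y, φ y * (g (s - y) - c)) =
        ∫ y, φ y * (g (t - y) - g (s - y)) := by
      rw [← integral_sub (hwell φ hφ t) (hwell φ hφ s)]
      congr 1; funext y; ring
    rw [edist_eq_enorm_sub, hI]
    have mp : MeasurePreserving (fun y : ℝ => s - y) volume volume := by
      have h1 := Measure.measurePreserving_neg (volume : Measure ℝ)
      have h2 := measurePreserving_add_left (volume : Measure ℝ) s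
      have h3 := h2.comp h1
      simpa [Function.comp_def, sub_eq_add_neg] using h3
    have hm : Measurable fun x : ℝ => (‖g (x + d) - g x‖₊ : ℝ≥0∞) :=
      ((hg.comp (measurable_add_const d)).sub hg).nnnorm.coe_nnreal_ennreal
    calc (↑‖∫ y, φ y * (g (t - y) - g (s - y))‖₊ : ℝ≥0∞)
        ≤ ∫⁻ y, ‖φ y * (g (t - y) - g (s - y))‖₊ := enorm_integral_le_lintegral_enorm _
      _ ≤ ∫⁻ y, ‖g (t - y) - g (s - y)‖₊ := by
          apply lintegral_mono; intro y
          have h1 : ‖φ y‖₊ ≤ 1 := by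
            have : ‖φ y‖ ≤ 1 := by rw [Real.norm_eq_abs]; exact hφ1 y
            exact_mod_cast this
          have : ‖φ y * (g (t - y) - g (s - y))‖₊ ≤ ‖g (t - y) - g (s - y)‖₊ := by
            rw [nnnorm_mul]
            exact mul_le_of_le_one_left zero_le h1
          exact ENNReal.coe_le_coe.2 this
      _ = ∫⁻ x, ‖g (x + d) - g x‖₊ := by
          rw [← mp.lintegral_comp hm]
          apply lintegral_congr; intro y
          have e1 : t - y = (s - y) + d := by rw [hdd]; ring
          rw [e1]
      _ ≤ eVariationOn g Set.univ * ENNReal.ofReal d := by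
          have := shiftEst11 g hg d hd
          simpa [edist_eq_enorm_sub, enorm_eq_nnnorm] using this
      _ = eVariationOn g Set.univ * edist t s := by
          rw [edist_dist, Real.dist_eq, abs_of_pos hd]
  intro t s
  rw [ENNReal.coe_toNNReal hBV]
  rcases lt_trichotomy s t with h | h | h
  · exact key t s h
  · subst h; simp
  · rw [edist_comm, edist_comm t s]
    exact key s t h
end

section
/- Let μ and ν be probability measures on ℝ and let G be a probability measure on ℝ that is absolutely continuous with respect to Lebesgue measure with a density g of bounded variation (which can be taken right-continuous). If μ and ν have finite first moments, then the total variation distance between the convolutions satisfies ‖μ * G − ν * G‖_TV ≤ (‖g‖_BV / 2) · W_1(μ, ν). -/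
open MeasureTheory ProbabilityTheory
open scoped ENNReal NNReal

lemma aux_measurable {g : ℝ → ℝ} (h : BoundedVariationOn g Set.univ) : Measurable g := by
  have hl : LocallyBoundedVariationOn g Set.univ := fun a b _ _ =>
    h.mono (Set.inter_subset_left)
  obtain ⟨p, q, hp, hq, hpq⟩ := hl.exists_monotoneOn_sub_monotoneOn
  rw [hpq]
  exact ((monotoneOn_univ.mp hp).measurable).sub ((monotoneOn_univ.mp hq).measurable)

lemma aux_tsum_le (g : ℝ → ℝ) (t a : ℝ) (ha : 0 < a) :
    ∑' k : ℤ, edist (g (t + (k : ℝ) * a + a)) (g (t + (k : ℝ) * a)) ≤ eVariationOn g Set.univ := by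
  rw [ENNReal.tsum_eq_iSup_sum]
  refine iSup_le fun s => ?_
  obtain ⟨N, hN⟩ : ∃ N : ℕ, ∀ k ∈ s, k ∈ Finset.Ico (-(N : ℤ)) (N : ℤ) := by
    refine ⟨(s.sup fun k => k.natAbs) + 1, fun k hk => ?_⟩
    have h1 := Finset.le_sup (f := fun k : ℤ => k.natAbs) hk
    have h2 : (k.natAbs : ℤ) ≤ ((s.sup fun k => k.natAbs : ℕ) : ℤ) := by exact_mod_cast h1
    simp only [Finset.mem_Ico]
    omega
  set u : ℕ → ℝ := fun i => t + ((i : ℝ) - (N : ℝ)) * a with hu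
  have hmono : Monotone u := by
    intro i j hij
    have : (i : ℝ) ≤ (j : ℝ) := by exact_mod_cast hij
    simp only [hu]
    nlinarith
  have hset : Finset.Ico (-(N : ℤ)) (N : ℤ)
      = (Finset.range (2 * N)).map ⟨fun i : ℕ => (i : ℤ) - N, fun i j h => by
          simp only at h; omega⟩ := by
    ext k
    simp only [Finset.mem_Ico, Finset.mem_map, Finset.mem_range, Function.Embedding.coeFn_mk]
    constructor
    · rintro ⟨h1, h2⟩; exact ⟨(k + N).toNat, by omega, by show (((k + N).toNat : ℕ) : ℤ) - N = k; omega⟩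
    · rintro ⟨i, hi, rfl⟩; show -(N : ℤ) ≤ (i : ℤ) - N ∧ (i : ℤ) - N < N; omega
  calc ∑ k ∈ s, edist (g (t + (k : ℝ) * a + a)) (g (t + (k : ℝ) * a))
      ≤ ∑ k ∈ Finset.Ico (-(N : ℤ)) (N : ℤ), edist (g (t + (k : ℝ) * a + a)) (g (t + (k : ℝ) * a)) :=
        Finset.sum_le_sum_of_subset (fun k hk => hN k hk)
    _ = ∑ i ∈ Finset.range (2 * N), edist (g (u (i + 1))) (g (u i)) := by
        rw [hset, Finset.sum_map]
        refine Finset.sum_congr rfl fun i _ => ?_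
        show edist (g (t + (((i : ℤ) - N : ℤ) : ℝ) * a + a)) (g (t + (((i : ℤ) - N : ℤ) : ℝ) * a)) = _
        simp only [Function.Embedding.coeFn_mk, hu]
        push_cast
        ring_nf
    _ ≤ eVariationOn g Set.univ := eVariationOn.sum_le (f := g) hmono (fun i => Set.mem_univ _)

lemma aux_l1 (g : ℝ → ℝ) (hgm : Measurable g) (a : ℝ) (ha : 0 ≤ a) :
    ∫⁻ x, edist (g (x + a)) (g x) ≤ eVariationOn g Set.univ * ENNReal.ofReal a := by
  rcases ha.eq_or_lt with rfl | ha'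
  · simp
  set φ : ℝ → ℝ≥0∞ := fun x => edist (g (x + a)) (g x) with hφ
  have hφm : Measurable φ := (hgm.comp (measurable_add_const a)).edist hgm
  have hmeas : ∀ k : ℤ, MeasurableSet (Set.Ico ((k : ℝ) * a) ((k : ℝ) * a + a)) :=
    fun k => measurableSet_Ico
  have hdisj : Pairwise (Function.onFun Disjoint
      fun k : ℤ => Set.Ico ((k : ℝ) * a) ((k : ℝ) * a + a)) := by
    intro k l hkl
    rw [Function.onFun, Set.Ico_disjoint_Ico]
    rcases hkl.lt_or_gt with h | h
    · have hk1 : ((k : ℝ) + 1) ≤ (l : ℝ) := by exact_mod_cast h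
      exact le_trans (min_le_left _ _) (le_trans (by nlinarith) (le_max_right _ _))
    · have hk1 : ((l : ℝ) + 1) ≤ (k : ℝ) := by exact_mod_cast h
      exact le_trans (min_le_right _ _) (le_trans (by nlinarith) (le_max_left _ _))
  have hunion : (⋃ k : ℤ, Set.Ico ((k : ℝ) * a) ((k : ℝ) * a + a)) = Set.univ := by
    have h := iUnion_Ico_zsmul ha' (α := ℝ)
    rw [← h]
    refine Set.iUnion_congr fun k => ?_
    have h1 : (k : ℝ) * a = k • a := by push_cast [zsmul_eq_mul]; ring
    have h2 : (k : ℝ) * a + a = (k + 1) • a := by push_cast [zsmul_eq_mul]; ring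
    rw [h2, h1]
  have htrans : ∀ k : ℤ, ∫⁻ x in Set.Ico ((k : ℝ) * a) ((k : ℝ) * a + a), φ x
      = ∫⁻ t in Set.Ico 0 a, φ (t + (k : ℝ) * a) := by
    intro k
    have hmp : MeasurePreserving (fun t : ℝ => t + (k : ℝ) * a) volume volume :=
      measurePreserving_add_right volume _
    have hemb : MeasurableEmbedding (fun t : ℝ => t + (k : ℝ) * a) :=
      (MeasurableEquiv.addRight ((k : ℝ) * a)).measurableEmbedding
    have hpre : (fun t : ℝ => t + (k : ℝ) * a) ⁻¹' Set.Ico ((k : ℝ) * a) ((k : ℝ) * a + a)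
        = Set.Ico 0 a := by
      ext t
      simp only [Set.mem_preimage, Set.mem_Ico]
      constructor <;> intro h <;> constructor <;> linarith [h.1, h.2]
    rw [← hpre, hmp.setLIntegral_comp_preimage_emb hemb]
  calc ∫⁻ x, φ x = ∫⁻ x in ⋃ k : ℤ, Set.Ico ((k : ℝ) * a) ((k : ℝ) * a + a), φ x := by
        rw [hunion, setLIntegral_univ]
    _ = ∑' k : ℤ, ∫⁻ x in Set.Ico ((k : ℝ) * a) ((k : ℝ) * a + a), φ x :=
        lintegral_iUnion hmeas hdisj φ
    _ = ∑' k : ℤ, ∫⁻ t in Set.Ico 0 a, φ (t + (k : ℝ) * a) := by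
        exact tsum_congr htrans
    _ = ∫⁻ t in Set.Ico 0 a, ∑' k : ℤ, φ (t + (k : ℝ) * a) := by
        refine (lintegral_tsum fun k => ?_).symm
        exact (hφm.comp (measurable_add_const _)).aemeasurable
    _ ≤ ∫⁻ _ in Set.Ico 0 a, eVariationOn g Set.univ := by
        refine lintegral_mono fun t => ?_
        have := aux_tsum_le g t a ha'
        refine le_trans (le_of_eq ?_) this
        refine tsum_congr fun k => ?_
        simp only [hφ]
    _ = eVariationOn g Set.univ * ENNReal.ofReal a := by
        rw [setLIntegral_const, Real.volume_Ico, sub_zero]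

lemma aux_l1_dir (g : ℝ → ℝ) (hgm : Measurable g) {x y : ℝ} (h : y ≤ x) :
    ∫⁻ s, edist (g (s - x)) (g (s - y)) ≤ eVariationOn g Set.univ * ENNReal.ofReal |x - y| := by
  have h1 : ∀ s : ℝ, edist (g (s - x)) (g (s - y))
      = (fun u => edist (g (u + (x - y))) (g u)) (s + (-x)) := by
    intro s
    simp only
    rw [edist_comm]
    congr 1 <;> congr 1 <;> ring
  calc ∫⁻ s, edist (g (s - x)) (g (s - y))
      = ∫⁻ s, (fun u => edist (g (u + (x - y))) (g u)) (s + (-x)) := by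
        exact lintegral_congr h1
    _ = ∫⁻ u, edist (g (u + (x - y))) (g u) :=
        lintegral_add_right_eq_self (fun u => edist (g (u + (x - y))) (g u)) (-x)
    _ ≤ eVariationOn g Set.univ * ENNReal.ofReal (x - y) :=
        aux_l1 g hgm (x - y) (sub_nonneg.mpr h)
    _ = eVariationOn g Set.univ * ENNReal.ofReal |x - y| := by
        rw [abs_of_nonneg (sub_nonneg.mpr h)]

lemma aux_l1' (g : ℝ → ℝ) (hgm : Measurable g) (x y : ℝ) :
    ∫⁻ s, edist (g (s - x)) (g (s - y)) ≤ eVariationOn g Set.univ * ENNReal.ofReal |x - y| := by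
  rcases le_total y x with h | h
  · exact aux_l1_dir g hgm h
  · have := aux_l1_dir g hgm h
    calc ∫⁻ s, edist (g (s - x)) (g (s - y)) = ∫⁻ s, edist (g (s - y)) (g (s - x)) := by
          simp only [edist_comm]
      _ ≤ eVariationOn g Set.univ * ENNReal.ofReal |y - x| := this
      _ = eVariationOn g Set.univ * ENNReal.ofReal |x - y| := by rw [abs_sub_comm]

lemma aux_repr (g : ℝ → ℝ) {A : Set ℝ} (hA : MeasurableSet A) (x : ℝ) :
    ∫⁻ t in (fun t => x + t) ⁻¹' A, ENNReal.ofReal (g t)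
      = ∫⁻ s in A, ENNReal.ofReal (g (s - x)) := by
  have hmp : MeasurePreserving (fun t : ℝ => t + x) volume volume :=
    measurePreserving_add_right volume x
  have hemb : MeasurableEmbedding (fun t : ℝ => t + x) :=
    (MeasurableEquiv.addRight x).measurableEmbedding
  have hpre : (fun t : ℝ => t + x) ⁻¹' A = (fun t => x + t) ⁻¹' A := by
    ext t; simp [add_comm]
  calc ∫⁻ t in (fun t => x + t) ⁻¹' A, ENNReal.ofReal (g t)
      = ∫⁻ t in (fun t : ℝ => t + x) ⁻¹' A,
          (fun s => ENNReal.ofReal (g (s - x))) (t + x) := by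
        rw [hpre]
        refine lintegral_congr fun t => ?_
        simp only [add_sub_cancel_right]
    _ = ∫⁻ s in A, ENNReal.ofReal (g (s - x)) :=
        hmp.setLIntegral_comp_preimage_emb hemb (fun s => ENNReal.ofReal (g (s - x))) A

lemma aux_lip (g : ℝ → ℝ) (hgm : Measurable g) (hgBV : BoundedVariationOn g Set.univ)
    (hgint : Integrable g volume) {A : Set ℝ} (hA : MeasurableSet A) (x y : ℝ) :
    |(∫ s in A, g (s - x)) - ∫ s in A, g (s - y)|
      ≤ (eVariationOn g Set.univ).toReal / 2 * |x - y| := by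
  set Δ : ℝ → ℝ := fun s => g (s - x) - g (s - y) with hΔ
  have hix : Integrable (fun s => g (s - x)) volume := hgint.comp_sub_right x
  have hiy : Integrable (fun s => g (s - y)) volume := hgint.comp_sub_right y
  have hΔi : Integrable Δ volume := hix.sub hiy
  have htot : ∫ s, Δ s = 0 := by
    rw [hΔ]
    simp only
    rw [integral_sub hix hiy, integral_sub_right_eq_self g x, integral_sub_right_eq_self g y,
      sub_self]
  have hsplit : (∫ s in A, Δ s) + (∫ s in Aᶜ, Δ s) = 0 := by
    rw [integral_add_compl hA hΔi, htot]
  have habs : ∫ s, |Δ s| ≤ (eVariationOn g Set.univ).toReal * |x - y| := by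
    have hlin : ∫⁻ s, ENNReal.ofReal |Δ s| ≤ eVariationOn g Set.univ * ENNReal.ofReal |x - y| := by
      have he : ∀ s, ENNReal.ofReal |Δ s| = edist (g (s - x)) (g (s - y)) := fun s => by
        rw [edist_dist, Real.dist_eq]
      calc ∫⁻ s, ENNReal.ofReal |Δ s| = ∫⁻ s, edist (g (s - x)) (g (s - y)) :=
            lintegral_congr he
        _ ≤ _ := aux_l1' g hgm x y
    have h2 : ∫ s, |Δ s| = (∫⁻ s, ENNReal.ofReal |Δ s|).toReal := by
      rw [integral_eq_lintegral_of_nonneg_ae (Filter.Eventually.of_forall fun s => abs_nonneg _)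
        hΔi.abs.aestronglyMeasurable]
    rw [h2]
    calc (∫⁻ s, ENNReal.ofReal |Δ s|).toReal
        ≤ (eVariationOn g Set.univ * ENNReal.ofReal |x - y|).toReal :=
          ENNReal.toReal_mono (ENNReal.mul_ne_top hgBV ENNReal.ofReal_ne_top) hlin
      _ = (eVariationOn g Set.univ).toReal * |x - y| := by
          rw [ENNReal.toReal_mul, ENNReal.toReal_ofReal (abs_nonneg _)]
  have hA1 : (∫ s in A, g (s - x)) - ∫ s in A, g (s - y) = ∫ s in A, Δ s :=
    (integral_sub hix.restrict hiy.restrict).symm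
  rw [hA1]
  have heq : |∫ s in A, Δ s| = |∫ s in Aᶜ, Δ s| := by
    rw [show (∫ s in A, Δ s) = -(∫ s in Aᶜ, Δ s) by linarith, abs_neg]
  have hb1 : |∫ s in A, Δ s| ≤ ∫ s in A, |Δ s| := by
    simpa [Real.norm_eq_abs] using norm_integral_le_integral_norm (μ := volume.restrict A) Δ
  have hb2 : |∫ s in Aᶜ, Δ s| ≤ ∫ s in Aᶜ, |Δ s| := by
    simpa [Real.norm_eq_abs] using norm_integral_le_integral_norm (μ := volume.restrict Aᶜ) Δ
  have hsum : (∫ s in A, |Δ s|) + (∫ s in Aᶜ, |Δ s|) = ∫ s, |Δ s| :=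
    integral_add_compl hA hΔi.abs
  linarith

lemma aux_key (μ ν G : Measure ℝ)
    [IsProbabilityMeasure μ] [IsProbabilityMeasure ν] [IsProbabilityMeasure G]
    (g : ℝ → ℝ) (hg0 : ∀ x, 0 ≤ g x)
    (hGd : G = volume.withDensity (fun x => ENNReal.ofReal (g x)))
    (hgBV : BoundedVariationOn g Set.univ)
    (π : Measure (ℝ × ℝ)) (hπ : IsProbabilityMeasure π)
    (h1 : π.map Prod.fst = μ) (h2 : π.map Prod.snd = ν) :
    ENNReal.ofReal (tvDist (mconv μ G) (mconv ν G))
      ≤ eVariationOn g Set.univ / 2 * ∫⁻ z, ENNReal.ofReal |z.1 - z.2| ∂π := by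
  classical
  have hgm : Measurable g := aux_measurable hgBV
  set V := eVariationOn g Set.univ with hV
  have hVne : V ≠ ⊤ := hgBV
  have hg1 : (∫⁻ t : ℝ, ENNReal.ofReal (g t)) = 1 := by
    have h := measure_univ (μ := G)
    rwa [hGd, withDensity_apply _ MeasurableSet.univ, Measure.restrict_univ] at h
  have hVpos : V ≠ 0 := by
    intro h0
    have hconst : ∀ x : ℝ, g x = g 0 := fun x =>
      edist_le_zero.mp (h0 ▸ eVariationOn.edist_le g (Set.mem_univ x) (Set.mem_univ 0))
    have hc : (∫⁻ t : ℝ, ENNReal.ofReal (g t)) = ENNReal.ofReal (g 0) * volume (Set.univ : Set ℝ) := by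
      calc (∫⁻ t : ℝ, ENNReal.ofReal (g t))
          = ∫⁻ _t : ℝ, ENNReal.ofReal (g 0) ∂volume :=
            lintegral_congr fun t => by rw [hconst t]
        _ = ENNReal.ofReal (g 0) * volume (Set.univ : Set ℝ) := lintegral_const _
    rw [hc] at hg1
    rcases eq_or_ne (g 0) 0 with h | h
    · rw [h] at hg1; simp at hg1
    · have hpos : 0 < g 0 := lt_of_le_of_ne (hg0 0) (Ne.symm h)
      rw [Real.volume_univ, ENNReal.mul_top (by simp [ENNReal.ofReal_eq_zero, not_le, hpos])]
        at hg1
      simp at hg1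
  have hc0 : V / 2 ≠ 0 := by
    simp [ENNReal.div_eq_zero_iff, hVpos]
  have hcT : V / 2 ≠ ⊤ := by
    simp [ENNReal.div_eq_top, hVne]
  set W := ∫⁻ z : ℝ × ℝ, ENNReal.ofReal |z.1 - z.2| ∂π with hWdef
  by_cases hW : W = ⊤
  · rw [hW, ENNReal.mul_top hc0]; exact le_top
  -- integrability of g
  have hgint : Integrable g volume := by
    refine ⟨hgm.aestronglyMeasurable, ?_⟩
    rw [hasFiniteIntegral_iff_ofReal (Filter.Eventually.of_forall hg0), hg1]
    exact ENNReal.one_lt_top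
  -- main per-set bound
  have main : ∀ A : Set ℝ, MeasurableSet A →
      |((mconv μ G) A).toReal - ((mconv ν G) A).toReal| ≤ V.toReal / 2 * W.toReal := by
    intro A hA
    have hS : MeasurableSet ((fun z : ℝ × ℝ => z.1 + z.2) ⁻¹' A) := measurable_add hA
    set F : ℝ → ℝ≥0∞ := fun x => G ((fun t => x + t) ⁻¹' A) with hF
    have hFm : Measurable F := by
      exact measurable_measure_prodMk_left (ν := G) hS
    have hF1 : ∀ x, F x ≤ 1 := fun x => prob_le_one
    have hconv : ∀ (κ : Measure ℝ), IsProbabilityMeasure κ →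
        (mconv κ G) A = ∫⁻ x, F x ∂κ := by
      intro κ hκ
      rw [mconv, Measure.map_apply measurable_add hA, Measure.prod_apply hS]
      rfl
    set f : ℝ → ℝ := fun x => (F x).toReal with hf
    have hfm : Measurable f := hFm.ennreal_toReal
    have htoReal : ∀ (κ : Measure ℝ), IsProbabilityMeasure κ →
        ((mconv κ G) A).toReal = ∫ x, f x ∂κ := by
      intro κ hκ
      rw [hconv κ hκ, ← integral_toReal hFm.aemeasurable
        (Filter.Eventually.of_forall fun x => lt_of_le_of_lt (hF1 x) ENNReal.one_lt_top)]
    have hfrepr : ∀ x, f x = ∫ s in A, g (s - x) := by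
      intro x
      have hrx : F x = ∫⁻ s in A, ENNReal.ofReal (g (s - x)) := by
        rw [hF]
        simp only
        rw [hGd, withDensity_apply _ ((measurable_const_add x) hA)]
        exact aux_repr g hA x
      have hint : ∫ s in A, g (s - x)
          = (∫⁻ s in A, ENNReal.ofReal (g (s - x))).toReal := by
        rw [integral_eq_lintegral_of_nonneg_ae
          (Filter.Eventually.of_forall fun s => hg0 _)
          ((hgm.comp (measurable_sub_const x)).aestronglyMeasurable)]
      rw [hint, hf]
      simp only [hrx]
    have hlip : ∀ x y, |f x - f y| ≤ V.toReal / 2 * |x - y| := by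
      intro x y
      rw [hfrepr x, hfrepr y]
      exact aux_lip g hgm hgBV hgint hA x y
    have hfb : ∀ x, |f x| ≤ 1 := fun x => by
      rw [hf, abs_of_nonneg ENNReal.toReal_nonneg]
      calc (F x).toReal ≤ (1 : ℝ≥0∞).toReal :=
            ENNReal.toReal_mono ENNReal.one_ne_top (hF1 x)
        _ = 1 := by simp
    have hi1 : Integrable (fun z : ℝ × ℝ => f z.1) π :=
      ⟨(hfm.comp measurable_fst).aestronglyMeasurable,
        HasFiniteIntegral.of_bounded (C := 1)
          (Filter.Eventually.of_forall fun z => by simpa [Real.norm_eq_abs] using hfb z.1)⟩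
    have hi2 : Integrable (fun z : ℝ × ℝ => f z.2) π :=
      ⟨(hfm.comp measurable_snd).aestronglyMeasurable,
        HasFiniteIntegral.of_bounded (C := 1)
          (Filter.Eventually.of_forall fun z => by simpa [Real.norm_eq_abs] using hfb z.2)⟩
    have hidiff : Integrable (fun z : ℝ × ℝ => |z.1 - z.2|) π := by
      refine ⟨((measurable_fst.sub measurable_snd).abs).aestronglyMeasurable, ?_⟩
      rw [hasFiniteIntegral_iff_ofReal (Filter.Eventually.of_forall fun z => abs_nonneg _)]
      exact lt_of_le_of_ne le_top hW
    have hμi : ((mconv μ G) A).toReal = ∫ z : ℝ × ℝ, f z.1 ∂π := by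
      rw [htoReal μ inferInstance, ← h1,
        integral_map measurable_fst.aemeasurable hfm.aestronglyMeasurable]
    have hνi : ((mconv ν G) A).toReal = ∫ z : ℝ × ℝ, f z.2 ∂π := by
      rw [htoReal ν inferInstance, ← h2,
        integral_map measurable_snd.aemeasurable hfm.aestronglyMeasurable]
    calc |((mconv μ G) A).toReal - ((mconv ν G) A).toReal|
        = |∫ z : ℝ × ℝ, (f z.1 - f z.2) ∂π| := by
          rw [hμi, hνi, ← integral_sub hi1 hi2]
      _ ≤ ∫ z : ℝ × ℝ, |f z.1 - f z.2| ∂π := by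
          simpa [Real.norm_eq_abs] using
            norm_integral_le_integral_norm (μ := π) (fun z : ℝ × ℝ => f z.1 - f z.2)
      _ ≤ ∫ z : ℝ × ℝ, V.toReal / 2 * |z.1 - z.2| ∂π :=
          integral_mono (hi1.sub hi2).abs (hidiff.const_mul _) (fun z => hlip z.1 z.2)
      _ = V.toReal / 2 * ∫ z : ℝ × ℝ, |z.1 - z.2| ∂π := integral_const_mul _ _
      _ = V.toReal / 2 * W.toReal := by
          congr 1
          rw [integral_eq_lintegral_of_nonneg_ae (f := fun z : ℝ × ℝ => |z.1 - z.2|)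
            (Filter.Eventually.of_forall fun z => abs_nonneg _)
            ((measurable_fst.sub measurable_snd).abs).aestronglyMeasurable]
  haveI : Nonempty {A : Set ℝ // MeasurableSet A} := ⟨⟨∅, MeasurableSet.empty⟩⟩
  have htv : tvDist (mconv μ G) (mconv ν G) ≤ V.toReal / 2 * W.toReal := by
    rw [tvDist]
    exact ciSup_le fun A => main A.1 A.2
  calc ENNReal.ofReal (tvDist (mconv μ G) (mconv ν G))
      ≤ ENNReal.ofReal (V.toReal / 2 * W.toReal) := ENNReal.ofReal_le_ofReal htv
    _ = ENNReal.ofReal (V.toReal / 2) * ENNReal.ofReal W.toReal :=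
        ENNReal.ofReal_mul (by positivity)
    _ = V / 2 * W := by
        rw [ENNReal.ofReal_toReal hW]
        congr 1
        rw [← ENNReal.toReal_ofNat (n := 2)]
        rw [← ENNReal.toReal_div, ENNReal.ofReal_toReal hcT]

/-- Smoothing in total variation: convolving with a measure having a
density of bounded variation turns a `W_1` bound into a total variation bound. -/
theorem statement12 (μ ν G : Measure ℝ)
    [IsProbabilityMeasure μ] [IsProbabilityMeasure ν] [IsProbabilityMeasure G]
    (g : ℝ → ℝ) (hg0 : ∀ x, 0 ≤ g x)
    (hgrc : ∀ x, ContinuousWithinAt g (Set.Ici x) x)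
    (hGd : G = volume.withDensity (fun x => ENNReal.ofReal (g x)))
    (hgBV : BoundedVariationOn g Set.univ)
    (hμmom : ∫⁻ x, ENNReal.ofReal |x| ∂μ ≠ ⊤)
    (hνmom : ∫⁻ x, ENNReal.ofReal |x| ∂ν ≠ ⊤) :
    ENNReal.ofReal (tvDist (mconv μ G) (mconv ν G))
      ≤ eVariationOn g Set.univ / 2 * wasserstein 1 μ ν := by
  have hgm : Measurable g := aux_measurable hgBV
  have hVne : eVariationOn g Set.univ ≠ ⊤ := hgBV
  have hVpos : eVariationOn g Set.univ ≠ 0 := by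
    intro h0
    have hg1 : (∫⁻ t : ℝ, ENNReal.ofReal (g t)) = 1 := by
      have h := measure_univ (μ := G)
      rwa [hGd, withDensity_apply _ MeasurableSet.univ, Measure.restrict_univ] at h
    have hconst : ∀ x : ℝ, g x = g 0 := fun x =>
      edist_le_zero.mp (h0 ▸ eVariationOn.edist_le g (Set.mem_univ x) (Set.mem_univ 0))
    have hc : (∫⁻ t : ℝ, ENNReal.ofReal (g t))
        = ENNReal.ofReal (g 0) * volume (Set.univ : Set ℝ) := by
      calc (∫⁻ t : ℝ, ENNReal.ofReal (g t))
          = ∫⁻ _t : ℝ, ENNReal.ofReal (g 0) ∂volume :=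
            lintegral_congr fun t => by rw [hconst t]
        _ = ENNReal.ofReal (g 0) * volume (Set.univ : Set ℝ) := lintegral_const _
    rw [hc] at hg1
    rcases eq_or_ne (g 0) 0 with h | h
    · rw [h] at hg1; simp at hg1
    · have hpos : 0 < g 0 := lt_of_le_of_ne (hg0 0) (Ne.symm h)
      rw [Real.volume_univ, ENNReal.mul_top (by simp [ENNReal.ofReal_eq_zero, not_le, hpos])]
        at hg1
      simp at hg1
  have hc0 : eVariationOn g Set.univ / 2 ≠ 0 := by
    simp [ENNReal.div_eq_zero_iff, hVpos]
  have hcT : eVariationOn g Set.univ / 2 ≠ ⊤ := by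
    simp [ENNReal.div_eq_top, hVne]
  simp only [wasserstein, wassersteinCost, one_div_one, ENNReal.rpow_one]
  rw [ENNReal.mul_iInf_of_ne hc0 hcT]
  refine le_iInf fun π => ?_
  rw [ENNReal.mul_iInf_of_ne hc0 hcT]
  refine le_iInf fun hπ => ?_
  obtain ⟨hp, hm1, hm2⟩ := hπ
  exact aux_key μ ν G g hg0 hGd hgBV π hp hm1 hm2
end

section
/- Let (X_i)_{i≥1} and (Y_i)_{i≥1} be sequences of i.i.d. real random variables that are almost surely nonzero, and let N, N' be Poisson random variables with means λ and λ' respectively, with N independent of (X_i) and N' independent of (Y_i). Then the total variation distance between the laws of the compound sums satisfies ‖law(Σ_{i=1}^{N} X_i) − law(Σ_{i=1}^{N'} Y_i)‖_TV ≤ (λ ∧ λ') · ‖law(X_1) − law(Y_1)‖_TV + 1 − e^{−|λ − λ'|}. -/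
open MeasureTheory ProbabilityTheory
open scoped ENNReal NNReal

/-! ### Auxiliary material for Statement 16 -/

section TVAux
variable {α : Type*} [MeasurableSpace α]

instance tvNonempty : Nonempty {A : Set α // MeasurableSet A} := ⟨⟨∅, MeasurableSet.empty⟩⟩

lemma tvDist_le {μ ν : Measure α} {c : ℝ}
    (h : ∀ A : Set α, MeasurableSet A → |(μ A).toReal - (ν A).toReal| ≤ c) :
    tvDist μ ν ≤ c :=
  ciSup_le fun A => h A.1 A.2

lemma abs_le_tvDist {μ ν : Measure α} [IsProbabilityMeasure μ] [IsProbabilityMeasure ν]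
    {A : Set α} (hA : MeasurableSet A) :
    |(μ A).toReal - (ν A).toReal| ≤ tvDist μ ν := by
  refine le_ciSup (f := fun A : {A : Set α // MeasurableSet A} =>
    |(μ A.1).toReal - (ν A.1).toReal|) ?_ ⟨A, hA⟩
  refine ⟨1, ?_⟩
  rintro x ⟨B, rfl⟩
  have h1 : (μ B.1).toReal ≤ 1 := by
    simpa using ENNReal.toReal_mono (by simp) (prob_le_one (μ := μ) (s := B.1))
  have h2 : (ν B.1).toReal ≤ 1 := by
    simpa using ENNReal.toReal_mono (by simp) (prob_le_one (μ := ν) (s := B.1))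
  have h3 : 0 ≤ (μ B.1).toReal := ENNReal.toReal_nonneg
  have h4 : 0 ≤ (ν B.1).toReal := ENNReal.toReal_nonneg
  rw [abs_le]; constructor <;> linarith

lemma tvDist_nonneg {μ ν : Measure α} [IsProbabilityMeasure μ] [IsProbabilityMeasure ν] :
    0 ≤ tvDist μ ν :=
  le_trans (abs_nonneg _) (abs_le_tvDist MeasurableSet.empty)

lemma tvDist_symm (μ ν : Measure α) : tvDist μ ν = tvDist ν μ := by
  unfold tvDist
  congr 1; ext A; exact abs_sub_comm _ _

lemma tvDist_triangle (μ ν ρ : Measure α) [IsProbabilityMeasure μ] [IsProbabilityMeasure ν]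
    [IsProbabilityMeasure ρ] : tvDist μ ρ ≤ tvDist μ ν + tvDist ν ρ := by
  refine tvDist_le fun A hA => ?_
  calc |(μ A).toReal - (ρ A).toReal|
      ≤ |(μ A).toReal - (ν A).toReal| + |(ν A).toReal - (ρ A).toReal| := abs_sub_le _ _ _
    _ ≤ tvDist μ ν + tvDist ν ρ := add_le_add (abs_le_tvDist hA) (abs_le_tvDist hA)

end TVAux

instance mconv_prob (μ ν : Measure ℝ) [IsProbabilityMeasure μ] [IsProbabilityMeasure ν] :
    IsProbabilityMeasure (mconv μ ν) :=
  Measure.isProbabilityMeasure_map (by fun_prop)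

lemma mconv_apply (μ ν : Measure ℝ) [SFinite μ] [SFinite ν] {A : Set ℝ} (hA : MeasurableSet A) :
    mconv μ ν A = ∫⁻ x, ν {y | x + y ∈ A} ∂μ := by
  rw [mconv, Measure.map_apply (by fun_prop) hA, Measure.prod_apply (by exact measurable_add hA)]
  rfl

lemma mconv_apply_symm (μ ν : Measure ℝ) [SFinite μ] [SFinite ν] {A : Set ℝ}
    (hA : MeasurableSet A) :
    mconv μ ν A = ∫⁻ y, μ {x | x + y ∈ A} ∂ν := by
  rw [mconv, Measure.map_apply (by fun_prop) hA,
    Measure.prod_apply_symm (by exact measurable_add hA)]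
  rfl

lemma lintegral_tv_aux {μ ν ρ : Measure ℝ} [IsProbabilityMeasure μ] [IsProbabilityMeasure ν]
    [IsProbabilityMeasure ρ] {f g : ℝ → ℝ≥0∞}
    (hf1 : ∀ x, f x ≤ 1) (hg1 : ∀ x, g x ≤ 1)
    (hfg : ∀ x, |(f x).toReal - (g x).toReal| ≤ tvDist μ ν) :
    |(∫⁻ x, f x ∂ρ).toReal - (∫⁻ x, g x ∂ρ).toReal| ≤ tvDist μ ν := by
  set t := tvDist μ ν with ht
  have ht0 : 0 ≤ t := tvDist_nonneg
  have key : ∀ (f g : ℝ → ℝ≥0∞), (∀ x, f x ≤ 1) → (∀ x, g x ≤ 1) →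
      (∀ x, |(f x).toReal - (g x).toReal| ≤ t) →
      ∫⁻ x, f x ∂ρ ≤ ∫⁻ x, g x ∂ρ + ENNReal.ofReal t := by
    intro f g hf1 hg1 hfg
    calc ∫⁻ x, f x ∂ρ ≤ ∫⁻ x, (g x + ENNReal.ofReal t) ∂ρ := by
          refine lintegral_mono fun x => ?_
          have h1 : (f x).toReal ≤ (g x).toReal + t := by
            have := abs_le.mp (hfg x); linarith [this.1, this.2]
          have := ENNReal.ofReal_le_ofReal h1
          rwa [ENNReal.ofReal_toReal (lt_of_le_of_lt (hf1 x) (by norm_num)).ne,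
            ENNReal.ofReal_add ENNReal.toReal_nonneg ht0,
            ENNReal.ofReal_toReal (lt_of_le_of_lt (hg1 x) (by norm_num)).ne] at this
      _ = ∫⁻ x, g x ∂ρ + ENNReal.ofReal t := by
          rw [lintegral_add_right _ measurable_const, lintegral_const, measure_univ, mul_one]
  have hfin : ∀ (f : ℝ → ℝ≥0∞), (∀ x, f x ≤ 1) → ∫⁻ x, f x ∂ρ ≠ ∞ := by
    intro f hf1
    refine (lt_of_le_of_lt (le_trans (lintegral_mono hf1) ?_) (by norm_num : (1:ℝ≥0∞) < ∞)).ne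
    simp
  have h1 := key f g hf1 hg1 hfg
  have h2 := key g f hg1 hf1 (fun x => by rw [abs_sub_comm]; exact hfg x)
  rw [abs_le]
  constructor
  · have := ENNReal.toReal_mono (by simp [hfin f hf1]) h2
    rw [ENNReal.toReal_add (hfin f hf1) (by simp), ENNReal.toReal_ofReal ht0] at this
    linarith
  · have := ENNReal.toReal_mono (by simp [hfin g hg1]) h1
    rw [ENNReal.toReal_add (hfin g hg1) (by simp), ENNReal.toReal_ofReal ht0] at this
    linarith

lemma tvDist_mconv_right (ρ μ ν : Measure ℝ) [IsProbabilityMeasure ρ] [IsProbabilityMeasure μ]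
    [IsProbabilityMeasure ν] : tvDist (mconv ρ μ) (mconv ρ ν) ≤ tvDist μ ν := by
  refine tvDist_le fun A hA => ?_
  rw [mconv_apply ρ μ hA, mconv_apply ρ ν hA]
  refine lintegral_tv_aux (fun x => prob_le_one) (fun x => prob_le_one) fun x => ?_
  exact abs_le_tvDist (by exact (measurable_const_add x) hA)

lemma tvDist_mconv_left (ρ μ ν : Measure ℝ) [IsProbabilityMeasure ρ] [IsProbabilityMeasure μ]
    [IsProbabilityMeasure ν] : tvDist (mconv μ ρ) (mconv ν ρ) ≤ tvDist μ ν := by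
  refine tvDist_le fun A hA => ?_
  rw [mconv_apply_symm μ ρ hA, mconv_apply_symm ν ρ hA]
  refine lintegral_tv_aux (fun x => prob_le_one) (fun x => prob_le_one) fun y => ?_
  exact abs_le_tvDist (by exact (measurable_add_const y) hA)

noncomputable def convpow (μ : Measure ℝ) : ℕ → Measure ℝ
  | 0 => Measure.dirac 0
  | k + 1 => mconv (convpow μ k) μ

instance convpow_prob (μ : Measure ℝ) [IsProbabilityMeasure μ] (k : ℕ) :
    IsProbabilityMeasure (convpow μ k) := by
  induction k with
  | zero => exact Measure.dirac.isProbabilityMeasure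
  | succ k ih => exact mconv_prob _ _

lemma tvDist_convpow (μ ν : Measure ℝ) [IsProbabilityMeasure μ] [IsProbabilityMeasure ν] (k : ℕ) :
    tvDist (convpow μ k) (convpow ν k) ≤ k * tvDist μ ν := by
  induction k with
  | zero => simp [convpow, tvDist]
  | succ k ih =>
    calc tvDist (convpow μ (k + 1)) (convpow ν (k + 1))
        ≤ tvDist (mconv (convpow μ k) μ) (mconv (convpow μ k) ν)
          + tvDist (mconv (convpow μ k) ν) (mconv (convpow ν k) ν) := tvDist_triangle _ _ _
      _ ≤ tvDist μ ν + k * tvDist μ ν :=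
          add_le_add (tvDist_mconv_right _ _ _) (le_trans (tvDist_mconv_left _ _ _) ih)
      _ = (k + 1 : ℕ) * tvDist μ ν := by push_cast; ring

noncomputable def pk (lam : ℝ) (k : ℕ) : ℝ := Real.exp (-lam) * lam ^ k / (Nat.factorial k)

lemma pk_nonneg {lam : ℝ} (h : 0 ≤ lam) (k : ℕ) : 0 ≤ pk lam k := by
  unfold pk; positivity

lemma summable_pk (lam : ℝ) : Summable (pk lam) := by
  unfold pk
  simpa [mul_div_assoc] using (Real.summable_pow_div_factorial lam).mul_left (Real.exp (-lam))

lemma tsum_exp_aux (lam : ℝ) : ∑' k, lam ^ k / (Nat.factorial k : ℝ) = Real.exp lam := by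
  rw [Real.exp_eq_exp_ℝ, NormedSpace.exp_eq_tsum_div]

lemma tsum_pk (lam : ℝ) : ∑' k, pk lam k = 1 := by
  unfold pk
  rw [show (fun k => Real.exp (-lam) * lam ^ k / (Nat.factorial k)) =
    (fun k => Real.exp (-lam) * (lam ^ k / (Nat.factorial k))) from funext fun k => by ring,
    tsum_mul_left, tsum_exp_aux, ← Real.exp_add]
  simp

lemma k_pk_succ (lam : ℝ) (k : ℕ) :
    ((k + 1 : ℕ) : ℝ) * pk lam (k + 1) = Real.exp (-lam) * lam * (lam ^ k / (Nat.factorial k)) := by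
  unfold pk
  rw [Nat.factorial_succ]
  push_cast
  have h1 : (Nat.factorial k : ℝ) ≠ 0 := Nat.cast_ne_zero.mpr (Nat.factorial_ne_zero k)
  have h2 : ((k : ℝ) + 1) ≠ 0 := by positivity
  field_simp
  ring

lemma summable_k_pk' (lam : ℝ) : Summable (fun k => ((k : ℕ) : ℝ) * pk lam k) := by
  rw [← summable_nat_add_iff 1]
  simp only [k_pk_succ]
  exact ((Real.summable_pow_div_factorial lam).mul_left _)

lemma tsum_k_pk (lam : ℝ) : ∑' k, ((k : ℕ) : ℝ) * pk lam k = lam := by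
  rw [Summable.tsum_eq_zero_add (summable_k_pk' lam)]
  simp only [k_pk_succ]
  rw [tsum_mul_left, tsum_exp_aux]
  have : Real.exp (-lam) * Real.exp lam = 1 := by rw [← Real.exp_add]; simp
  push_cast
  linear_combination lam * this

noncomputable def cp (lam : ℝ) (μ : Measure ℝ) : Measure ℝ :=
  Measure.sum fun k => ENNReal.ofReal (pk lam k) • convpow μ k

lemma cp_apply {lam : ℝ} (μ : Measure ℝ) {A : Set ℝ} (hA : MeasurableSet A) :
    cp lam μ A = ∑' k, ENNReal.ofReal (pk lam k) * convpow μ k A := by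
  rw [cp, Measure.sum_apply _ hA]; rfl

lemma cp_prob {lam : ℝ} (hlam : 0 ≤ lam) (μ : Measure ℝ) [IsProbabilityMeasure μ] :
    IsProbabilityMeasure (cp lam μ) := by
  constructor
  rw [cp_apply μ MeasurableSet.univ]
  simp only [measure_univ, mul_one]
  rw [← ENNReal.ofReal_tsum_of_nonneg (pk_nonneg hlam) (summable_pk lam), tsum_pk]
  norm_num

lemma cp_apply_toReal {lam : ℝ} (hlam : 0 ≤ lam) (μ : Measure ℝ) [IsProbabilityMeasure μ]
    {A : Set ℝ} (hA : MeasurableSet A) :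
    (cp lam μ A).toReal = ∑' k, pk lam k * (convpow μ k A).toReal := by
  rw [cp_apply μ hA, ENNReal.tsum_toReal_eq]
  · congr 1; ext k
    rw [ENNReal.toReal_mul, ENNReal.toReal_ofReal (pk_nonneg hlam k)]
  · intro k
    exact (ENNReal.mul_lt_top ENNReal.ofReal_lt_top (measure_lt_top _ _)).ne

lemma summable_pk_mul {lam : ℝ} (hlam : 0 ≤ lam) {x : ℕ → ℝ} (hx0 : ∀ k, 0 ≤ x k)
    (hx1 : ∀ k, x k ≤ 1) : Summable (fun k => pk lam k * x k) := by
  refine Summable.of_nonneg_of_le (fun k => mul_nonneg (pk_nonneg hlam k) (hx0 k))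
    (fun k => ?_) (summable_pk lam)
  calc pk lam k * x k ≤ pk lam k * 1 :=
        mul_le_mul_of_nonneg_left (hx1 k) (pk_nonneg hlam k)
    _ = pk lam k := mul_one _

lemma measure_toReal_mem {μ : Measure ℝ} [IsProbabilityMeasure μ] (A : Set ℝ) :
    0 ≤ (μ A).toReal ∧ (μ A).toReal ≤ 1 := by
  refine ⟨ENNReal.toReal_nonneg, ?_⟩
  simpa using ENNReal.toReal_mono (by simp) (prob_le_one (μ := μ) (s := A))

lemma tvDist_cp_same_lam {lam : ℝ} (hlam : 0 ≤ lam) (μ ν : Measure ℝ)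
    [IsProbabilityMeasure μ] [IsProbabilityMeasure ν] :
    tvDist (cp lam μ) (cp lam ν) ≤ lam * tvDist μ ν := by
  set t := tvDist μ ν with ht
  have ht0 : 0 ≤ t := tvDist_nonneg
  refine tvDist_le fun A hA => ?_
  rw [cp_apply_toReal hlam μ hA, cp_apply_toReal hlam ν hA]
  set x : ℕ → ℝ := fun k => (convpow μ k A).toReal
  set y : ℕ → ℝ := fun k => (convpow ν k A).toReal
  have hx := fun k => measure_toReal_mem (μ := convpow μ k) A
  have hy := fun k => measure_toReal_mem (μ := convpow ν k) A
  have hsx : Summable (fun k => pk lam k * x k) :=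
    summable_pk_mul hlam (fun k => (hx k).1) (fun k => (hx k).2)
  have hsy : Summable (fun k => pk lam k * y k) :=
    summable_pk_mul hlam (fun k => (hy k).1) (fun k => (hy k).2)
  have hmaj : Summable (fun k : ℕ => (k : ℝ) * pk lam k * t) := (summable_k_pk' lam).mul_right t
  have habs : ∀ k : ℕ, |pk lam k * x k - pk lam k * y k| ≤ (k : ℝ) * pk lam k * t := by
    intro k
    rw [← mul_sub, abs_mul, abs_of_nonneg (pk_nonneg hlam k)]
    have hxy : |x k - y k| ≤ (k : ℝ) * t :=
      le_trans (abs_le_tvDist hA) (tvDist_convpow μ ν k)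
    calc pk lam k * |x k - y k| ≤ pk lam k * ((k : ℝ) * t) :=
          mul_le_mul_of_nonneg_left hxy (pk_nonneg hlam k)
      _ = (k : ℝ) * pk lam k * t := by ring
  rw [← Summable.tsum_sub hsx hsy]
  have hsd : Summable (fun k => |pk lam k * x k - pk lam k * y k|) :=
    hmaj.of_nonneg_of_le (fun k => abs_nonneg _) habs
  calc |∑' k, (pk lam k * x k - pk lam k * y k)|
      ≤ ∑' k, |pk lam k * x k - pk lam k * y k| := by
        have := norm_tsum_le_tsum_norm (f := fun k => pk lam k * x k - pk lam k * y k)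
          (by simpa [Real.norm_eq_abs] using hsd)
        simpa [Real.norm_eq_abs] using this
    _ ≤ ∑' k : ℕ, (k : ℝ) * pk lam k * t := Summable.tsum_le_tsum habs hsd hmaj
    _ = lam * t := by rw [tsum_mul_right, tsum_k_pk]

lemma tvDist_cp_same_meas {lam lam' : ℝ} (hlam : 0 ≤ lam) (hle : lam ≤ lam') (ρ : Measure ℝ)
    [IsProbabilityMeasure ρ] :
    tvDist (cp lam ρ) (cp lam' ρ) ≤ 1 - Real.exp (-(lam' - lam)) := by
  have hlam' : 0 ≤ lam' := le_trans hlam hle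
  set E := Real.exp (-(lam' - lam)) with hE
  have hE1 : E ≤ 1 := Real.exp_le_one_iff.mpr (by linarith)
  have hE0 : 0 < E := Real.exp_pos _
  have hqp : ∀ k, E * pk lam k ≤ pk lam' k := by
    intro k
    have hcomb : Real.exp (-(lam' - lam)) * Real.exp (-lam) = Real.exp (-lam') := by
      rw [← Real.exp_add]; congr 1; ring
    unfold pk
    calc E * (Real.exp (-lam) * lam ^ k / k.factorial)
        = (Real.exp (-(lam' - lam)) * Real.exp (-lam)) * lam ^ k / k.factorial := by
          rw [hE]; ring
      _ = Real.exp (-lam') * lam ^ k / k.factorial := by rw [hcomb]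
      _ ≤ Real.exp (-lam') * lam' ^ k / k.factorial := by
          gcongr
  refine tvDist_le fun A hA => ?_
  rw [cp_apply_toReal hlam ρ hA, cp_apply_toReal hlam' ρ hA]
  set x : ℕ → ℝ := fun k => (convpow ρ k A).toReal with hxdef
  have hx := fun k => measure_toReal_mem (μ := convpow ρ k) A
  have hsp : Summable (fun k => pk lam k * x k) :=
    summable_pk_mul hlam (fun k => (hx k).1) (fun k => (hx k).2)
  have hsq : Summable (fun k => pk lam' k * x k) :=
    summable_pk_mul hlam' (fun k => (hx k).1) (fun k => (hx k).2)
  have hub : ∑' k, (pk lam k * x k - pk lam' k * x k) ≤ 1 - E := by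
    have hterm : ∀ k, pk lam k * x k - pk lam' k * x k ≤ (1 - E) * pk lam k := by
      intro k
      have h1 : E * pk lam k * x k ≤ pk lam' k * x k :=
        mul_le_mul_of_nonneg_right (hqp k) (hx k).1
      have h2 : (1 - E) * (pk lam k * x k) ≤ (1 - E) * pk lam k := by
        refine mul_le_mul_of_nonneg_left ?_ (by linarith)
        calc pk lam k * x k ≤ pk lam k * 1 :=
              mul_le_mul_of_nonneg_left (hx k).2 (pk_nonneg hlam k)
          _ = pk lam k := mul_one _
      nlinarith [h1, h2]
    calc ∑' k, (pk lam k * x k - pk lam' k * x k) ≤ ∑' k, (1 - E) * pk lam k :=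
          Summable.tsum_le_tsum hterm (hsp.sub hsq) ((summable_pk lam).mul_left _)
      _ = 1 - E := by rw [tsum_mul_left, tsum_pk, mul_one]
  have hlb : ∑' k, (pk lam' k * x k - pk lam k * x k) ≤ 1 - E := by
    have hterm : ∀ k, pk lam' k * x k - pk lam k * x k ≤ pk lam' k - E * pk lam k := by
      intro k
      have h1 : E * pk lam k * x k ≤ pk lam k * x k := by
        refine mul_le_mul_of_nonneg_right ?_ (hx k).1
        nlinarith [pk_nonneg hlam k]
      have h2 : (pk lam' k - E * pk lam k) * x k ≤ (pk lam' k - E * pk lam k) * 1 := by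
        refine mul_le_mul_of_nonneg_left (hx k).2 ?_
        linarith [hqp k]
      nlinarith [h1, h2]
    calc ∑' k, (pk lam' k * x k - pk lam k * x k)
        ≤ ∑' k, (pk lam' k - E * pk lam k) := Summable.tsum_le_tsum hterm (hsq.sub hsp)
          ((summable_pk lam').sub ((summable_pk lam).mul_left E))
      _ = 1 - E := by
          rw [Summable.tsum_sub (summable_pk lam') ((summable_pk lam).mul_left E),
            tsum_mul_left, tsum_pk, tsum_pk, mul_one]
  rw [Summable.tsum_sub hsp hsq] at hub
  rw [Summable.tsum_sub hsq hsp] at hlb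
  rw [abs_le]
  constructor <;> linarith

lemma tvDist_cp_le {lam lam' : ℝ} (hlam : 0 ≤ lam) (hle : lam ≤ lam') (μ ν : Measure ℝ)
    [IsProbabilityMeasure μ] [IsProbabilityMeasure ν] :
    tvDist (cp lam μ) (cp lam' ν) ≤ lam * tvDist μ ν + (1 - Real.exp (-(lam' - lam))) := by
  have hlam' : 0 ≤ lam' := le_trans hlam hle
  haveI := cp_prob hlam μ
  haveI := cp_prob hlam ν
  haveI := cp_prob hlam' ν
  calc tvDist (cp lam μ) (cp lam' ν)
      ≤ tvDist (cp lam μ) (cp lam ν) + tvDist (cp lam ν) (cp lam' ν) := tvDist_triangle _ _ _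
    _ ≤ lam * tvDist μ ν + (1 - Real.exp (-(lam' - lam))) :=
        add_le_add (tvDist_cp_same_lam hlam μ ν) (tvDist_cp_same_meas hlam hle ν)

section CompoundLaw
variable {Ω : Type*} [MeasurableSpace Ω] (P : Measure Ω) [IsProbabilityMeasure P]

lemma map_add_eq_mconv {f g : Ω → ℝ} (hf : Measurable f) (hg : Measurable g)
    (h : IndepFun f g P) : P.map (fun ω => f ω + g ω) = mconv (P.map f) (P.map g) := by
  rw [indepFun_iff_map_prod_eq_prod_map_map hf.aemeasurable hg.aemeasurable] at h
  rw [mconv, ← h, Measure.map_map measurable_add (hf.prodMk hg)]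
  rfl

lemma law_sum_eq_convpow (X : ℕ → Ω → ℝ) (hXm : ∀ i, Measurable (X i))
    (hXi : iIndepFun X P)
    (hXid : ∀ i, IdentDistrib (X i) (X 0) P P) (k : ℕ) :
    P.map (fun ω => ∑ i ∈ Finset.range k, X i ω) = convpow (P.map (X 0)) k := by
  induction k with
  | zero =>
    simp only [Finset.range_zero, Finset.sum_empty, convpow]
    rw [Measure.map_const, measure_univ, one_smul]
  | succ k ih =>
    have hsum : Measurable (fun ω => ∑ i ∈ Finset.range k, X i ω) := by
      exact Finset.measurable_sum _ fun i _ => hXm i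
    have hind : IndepFun (fun ω => ∑ i ∈ Finset.range k, X i ω) (X k) P := by
      have := hXi.indepFun_sum_range_succ hXm k
      convert this using 1
      ext ω
      simp [Finset.sum_apply]
    have : (fun ω => ∑ i ∈ Finset.range (k + 1), X i ω)
        = fun ω => (∑ i ∈ Finset.range k, X i ω) + X k ω := by
      ext ω; exact Finset.sum_range_succ _ k
    rw [this, map_add_eq_mconv P hsum (hXm k) hind, ih, (hXid k).map_eq]
    rfl

lemma poissonNat_singleton (lam : ℝ) (k : ℕ) :
    poissonNat lam {k} = ENNReal.ofReal (pk lam k) := by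
  rw [poissonNat, Measure.sum_apply _ (measurableSet_singleton k)]
  rw [tsum_eq_single k]
  · simp [Measure.dirac_apply_of_mem, pk]
  · intro j hj
    simp only [Measure.smul_apply, smul_eq_mul]
    rw [Measure.dirac_apply' _ (measurableSet_singleton k)]
    simp [Set.indicator_of_notMem, hj]

lemma law_compound (X : ℕ → Ω → ℝ) (N : Ω → ℕ) (lam : ℝ)
    (hXm : ∀ i, Measurable (X i)) (hNm : Measurable N)
    (hXi : iIndepFun X P)
    (hXid : ∀ i, IdentDistrib (X i) (X 0) P P)
    (hN : P.map N = poissonNat lam)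
    (hNind : IndepFun N (fun ω i => X i ω) P) :
    P.map (fun ω => ∑ i ∈ Finset.range (N ω), X i ω) = cp lam (P.map (X 0)) := by
  have hF : Measurable (fun ω i => X i ω) := measurable_pi_lambda _ hXm
  have hg : ∀ k : ℕ, Measurable (fun x : ℕ → ℝ => ∑ i ∈ Finset.range k, x i) :=
    fun k => Finset.measurable_sum _ fun i _ => measurable_pi_apply i
  have hG : Measurable (fun p : (ℕ → ℝ) × ℕ => ∑ i ∈ Finset.range p.2, p.1 i) :=
    measurable_from_prod_countable_left fun k => hg k
  have hSN : Measurable (fun ω => ∑ i ∈ Finset.range (N ω), X i ω) := by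
    have : (fun ω => ∑ i ∈ Finset.range (N ω), X i ω)
        = (fun p : (ℕ → ℝ) × ℕ => ∑ i ∈ Finset.range p.2, p.1 i)
          ∘ (fun ω => (fun i => X i ω, N ω)) := rfl
    rw [this]
    exact hG.comp (hF.prodMk hNm)
  have hSk : ∀ k : ℕ, Measurable (fun ω => ∑ i ∈ Finset.range k, X i ω) :=
    fun k => Finset.measurable_sum _ fun i _ => hXm i
  ext A hA
  rw [Measure.map_apply hSN hA, cp, Measure.sum_apply _ hA]
  have hdecomp : (fun ω => ∑ i ∈ Finset.range (N ω), X i ω) ⁻¹' A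
      = ⋃ k : ℕ, (N ⁻¹' {k} ∩ (fun ω => ∑ i ∈ Finset.range k, X i ω) ⁻¹' A) := by
    ext ω
    simp only [Set.mem_preimage, Set.mem_iUnion, Set.mem_inter_iff, Set.mem_singleton_iff]
    constructor
    · intro h; exact ⟨N ω, rfl, h⟩
    · rintro ⟨k, rfl, h⟩; exact h
  rw [hdecomp, measure_iUnion]
  · congr 1
    ext k
    have hpre : (fun ω => ∑ i ∈ Finset.range k, X i ω) ⁻¹' A
        = (fun ω i => X i ω) ⁻¹' ((fun x : ℕ → ℝ => ∑ i ∈ Finset.range k, x i) ⁻¹' A) := rfl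
    rw [hpre, hNind.measure_inter_preimage_eq_mul _ _ (measurableSet_singleton k) (hg k hA),
      ← hpre]
    have h1 : P (N ⁻¹' {k}) = ENNReal.ofReal (pk lam k) := by
      rw [← Measure.map_apply hNm (measurableSet_singleton k), hN, poissonNat_singleton]
    have h2 : P ((fun ω => ∑ i ∈ Finset.range k, X i ω) ⁻¹' A)
        = convpow (P.map (X 0)) k A := by
      rw [← Measure.map_apply (hSk k) hA, law_sum_eq_convpow P X hXm hXi hXid k]
    rw [h1, h2]
    rfl
  · intro k l hkl
    simp only [Function.onFun]
    refine Set.disjoint_left.mpr fun ω hω hω' => hkl ?_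
    have := hω.1; have := hω'.1
    simp only [Set.mem_preimage, Set.mem_singleton_iff] at *
    omega
  · intro k
    exact (hNm (measurableSet_singleton k)).inter ((hSk k) hA)

end CompoundLaw

/-- Total variation distance between compound Poisson sums. -/
theorem statement16 (lam lam' : ℝ) (hlam : 0 ≤ lam) (hlam' : 0 ≤ lam')
    {Ω : Type*} [MeasurableSpace Ω] (P : Measure Ω) [IsProbabilityMeasure P]
    (X Y : ℕ → Ω → ℝ) (N N' : Ω → ℕ)
    (hXm : ∀ i, Measurable (X i)) (hYm : ∀ i, Measurable (Y i))
    (hNm : Measurable N) (hN'm : Measurable N')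
    (hXi : iIndepFun X P)
    (hYi : iIndepFun Y P)
    (hXid : ∀ i, IdentDistrib (X i) (X 0) P P)
    (hYid : ∀ i, IdentDistrib (Y i) (Y 0) P P)
    (hXne : ∀ i, ∀ᵐ ω ∂P, X i ω ≠ 0) (hYne : ∀ i, ∀ᵐ ω ∂P, Y i ω ≠ 0)
    (hN : P.map N = poissonNat lam) (hN' : P.map N' = poissonNat lam')
    (hNind : IndepFun N (fun ω i => X i ω) P)
    (hN'ind : IndepFun N' (fun ω i => Y i ω) P) :
    tvDist (P.map (fun ω => ∑ i ∈ Finset.range (N ω), X i ω))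
        (P.map (fun ω => ∑ i ∈ Finset.range (N' ω), Y i ω))
      ≤ min lam lam' * tvDist (P.map (X 0)) (P.map (Y 0))
        + (1 - Real.exp (-|lam - lam'|)) := by
  haveI : IsProbabilityMeasure (P.map (X 0)) := Measure.isProbabilityMeasure_map (hXm 0).aemeasurable
  haveI : IsProbabilityMeasure (P.map (Y 0)) := Measure.isProbabilityMeasure_map (hYm 0).aemeasurable
  rw [law_compound P X N lam hXm hNm hXi hXid hN hNind,
    law_compound P Y N' lam' hYm hN'm hYi hYid hN' hN'ind]
  rcases le_total lam lam' with h | h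
  · rw [min_eq_left h, abs_of_nonpos (sub_nonpos.mpr h), neg_sub]
    exact tvDist_cp_le hlam h _ _
  · rw [min_eq_right h, abs_of_nonneg (sub_nonneg.mpr h),
      tvDist_symm (cp lam (P.map (X 0))) (cp lam' (P.map (Y 0))),
      tvDist_symm (P.map (X 0)) (P.map (Y 0))]
    exact tvDist_cp_le hlam' h _ _
end
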